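/- arXiv:1801.08341 — 6 statements merged into one kernel-verified Lean document; each statement's English description precedes it below -/
import Mathlib

section
/- For every 2-player cake-cutting instance, every integer k ≥ 1, and every k-piece allocation (A_1, A_2), there exists a contiguous allocation (B_1, B_2) such that V_1(A_1) + V_2(A_2) ≤ (2 − 1/k)·(V_1(B_1) + V_2(B_2)). (Hence the maximum utilitarian welfare over k-piece allocations is at most 2 − 1/k times the maximum utilitarian welfare over contiguous allocations, i.e., POIU(2,k) ≤ 2 − 1/k.) -/
open MeasureTheory Set

/-- An `n`-player cake-cutting instance: continuous nonnegative density functions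
on `[0,1]`, each of total integral `1`. -/
structure CakeInstance (n : ℕ) where
  d : Fin n → ℝ → ℝ
  cont : ∀ i, ContinuousOn (d i) (Set.Icc 0 1)
  nonneg : ∀ i, ∀ x ∈ Set.Icc (0:ℝ) 1, 0 ≤ d i x
  total : ∀ i, ∫ x in (0:ℝ)..1, d i x = 1

namespace CakeInstance

/-- Value of player `i` for the interval `[a,b]`. -/
noncomputable def ival {n : ℕ} (C : CakeInstance n) (i : Fin n) (a b : ℝ) : ℝ :=
  ∫ x in a..b, C.d i x

/-- Value of player `i` for a set `S`. -/
noncomputable def sval {n : ℕ} (C : CakeInstance n) (i : Fin n) (S : Set ℝ) : ℝ :=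
  ∫ x in S, C.d i x

end CakeInstance

/-- A contiguous allocation: weakly increasing cut points `x 0 = 0 ≤ … ≤ x n = 1`
together with a permutation `σ` assigning the `j`-th interval `[x j, x (j+1)]`
to player `σ j`. -/
structure ContigAlloc (n : ℕ) where
  x : Fin (n+1) → ℝ
  mono : Monotone x
  first : x 0 = 0
  last : x (Fin.last n) = 1
  σ : Equiv.Perm (Fin n)

/-- The (closed) interval received by player `i` in a contiguous allocation. -/
def cpiece {n : ℕ} (A : ContigAlloc n) (i : Fin n) : Set ℝ :=
  Set.Icc (A.x (A.σ.symm i).castSucc) (A.x (A.σ.symm i).succ)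

/-- Value of player `i` for the interval received by player `j`. -/
noncomputable def cval {n : ℕ} (C : CakeInstance n) (A : ContigAlloc n) (i j : Fin n) : ℝ :=
  C.ival i (A.x (A.σ.symm j).castSucc) (A.x (A.σ.symm j).succ)

/-- Utilitarian welfare of a contiguous allocation. -/
noncomputable def cWelfare {n : ℕ} (C : CakeInstance n) (A : ContigAlloc n) : ℝ :=
  ∑ i, cval C A i i

/-- Egalitarian welfare of a contiguous allocation. -/
noncomputable def cEgal {n : ℕ} (C : CakeInstance n) (A : ContigAlloc n) : ℝ :=
  ⨅ i, cval C A i i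

/-- A contiguous allocation is envy-free if nobody prefers another player's interval. -/
def cEnvyFree {n : ℕ} (C : CakeInstance n) (A : ContigAlloc n) : Prop :=
  ∀ i j, cval C A i j ≤ cval C A i i

/-- A `k`-piece allocation: each player `i` receives the union of (at most) `k`
closed intervals `[lo i m, hi i m] ⊆ [0,1]` (possibly degenerate); all these
intervals are pairwise non-overlapping and together they cover `[0,1]`. -/
structure KPieceAlloc (n k : ℕ) where
  lo : Fin n → Fin k → ℝ
  hi : Fin n → Fin k → ℝ
  le : ∀ i m, lo i m ≤ hi i m
  sub : ∀ i m, Set.Icc (lo i m) (hi i m) ⊆ Set.Icc (0:ℝ) 1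
  nonoverlap : ∀ i m i' m', (i, m) ≠ (i', m') →
      Set.Ioo (lo i m) (hi i m) ∩ Set.Ioo (lo i' m') (hi i' m') = ∅
  cover : (⋃ i, ⋃ m, Set.Icc (lo i m) (hi i m)) = Set.Icc (0:ℝ) 1

/-- Value of player `i` for the portion received by player `j` in a `k`-piece allocation. -/
noncomputable def kval {n k : ℕ} (C : CakeInstance n) (A : KPieceAlloc n k) (i j : Fin n) : ℝ :=
  ∑ m, C.ival i (A.lo j m) (A.hi j m)

/-- Utilitarian welfare of a `k`-piece allocation. -/
noncomputable def kWelfare {n k : ℕ} (C : CakeInstance n) (A : KPieceAlloc n k) : ℝ :=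
  ∑ i, kval C A i i

/-- Egalitarian welfare of a `k`-piece allocation. -/
noncomputable def kEgal {n k : ℕ} (C : CakeInstance n) (A : KPieceAlloc n k) : ℝ :=
  ⨅ i, kval C A i i

/-- A `k`-piece allocation is envy-free if nobody prefers another player's portion. -/
def kEnvyFree {n k : ℕ} (C : CakeInstance n) (A : KPieceAlloc n k) : Prop :=
  ∀ i j, kval C A i j ≤ kval C A i i

/-- A witness that an `n`-player cake-cutting instance lies in the class `X(k)`:
cut points `0 = c 0 < c 1 < … < c (n*k) = 1` and an ownership map under which each
player owns exactly `k` of the pieces `[c j, c (j+1)]` and values the unowned pieces `0`. -/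
structure XkWitness {n : ℕ} (C : CakeInstance n) (k : ℕ) where
  c : Fin (n*k+1) → ℝ
  mono : StrictMono c
  first : c 0 = 0
  last : c (Fin.last (n*k)) = 1
  owner : Fin (n*k) → Fin n
  ownCount : ∀ i : Fin n, (Finset.univ.filter fun j => owner j = i).card = k
  zeroVal : ∀ (i : Fin n) (j : Fin (n*k)), owner j ≠ i →
      C.ival i (c j.castSucc) (c j.succ) = 0

/-- The `j`-th owned piece, as a set. -/
def XkWitness.pieceSet {n k : ℕ} {C : CakeInstance n} (W : XkWitness C k)
    (j : Fin (n*k)) : Set ℝ :=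
  Set.Icc (W.c j.castSucc) (W.c j.succ)

/-- Value of player `i` for the `j`-th owned piece. -/
noncomputable def XkWitness.pieceVal {n k : ℕ} {C : CakeInstance n} (W : XkWitness C k)
    (i : Fin n) (j : Fin (n*k)) : ℝ :=
  C.ival i (W.c j.castSucc) (W.c j.succ)

/-- A `k`-piece allocation gives each player exactly the pieces he owns:
every owned piece occurs among its owner's allocated intervals. -/
def XkWitness.givesOwnedPieces {n k : ℕ} {C : CakeInstance n} (W : XkWitness C k)
    (A : KPieceAlloc n k) : Prop :=
  ∀ j : Fin (n*k), ∃ m : Fin k,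
    A.lo (W.owner j) m = W.c j.castSucc ∧ A.hi (W.owner j) m = W.c j.succ

/-!
With two players, `V₁(A₁) + V₂(A₂) = 1 + s` where `s = V₁(A₁) - V₂(A₁)`, and the
contiguous allocation cut at `t` has welfare `1 ± g t`, where `g t = V₁[0,t] - V₂[0,t]`;
so the best contiguous welfare is `1 + M` with `M = max |g|`. The difference `s` telescopes
along the pieces of either player as `±∑ (g (hi m) - g (lo m))`. Choosing the player whose
piece starts at `0`, where `g` vanishes, this sum has only `2k - 1` nonzero terms, so
`s ≤ (2k - 1) M`. Together with `s ≤ 1` this gives `k (1 + s) ≤ (2k - 1)(1 + M)`.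
-/

open intervalIntegral

theorem abs_sum_sub_le_of_eq_zero {ι : Type*} [Fintype ι] (u v : ι → ℝ) {M : ℝ}
    (hu : ∀ i, |u i| ≤ M) (hv : ∀ i, |v i| ≤ M) {i₀ : ι} (hi₀ : v i₀ = 0) :
    |∑ i, (u i - v i)| ≤ (2 * Fintype.card ι - 1) * M := by
  classical
  have hcard : ((Finset.univ.erase i₀).card : ℝ) + 1 = Fintype.card ι := by
    exact_mod_cast Finset.card_erase_add_one (Finset.mem_univ i₀)
  have hsum_v : ∑ i, v i = ∑ i ∈ Finset.univ.erase i₀, v i := by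
    rw [← Finset.add_sum_erase _ _ (Finset.mem_univ i₀), hi₀, zero_add]
  calc |∑ i, (u i - v i)| = |∑ i, u i - ∑ i ∈ Finset.univ.erase i₀, v i| := by
        rw [Finset.sum_sub_distrib, hsum_v]
    _ ≤ ∑ i, |u i| + ∑ i ∈ Finset.univ.erase i₀, |v i| :=
        (abs_sub _ _).trans (add_le_add (Finset.abs_sum_le_sum_abs _ _)
          (Finset.abs_sum_le_sum_abs _ _))
    _ ≤ Fintype.card ι • M + (Finset.univ.erase i₀).card • M :=
        add_le_add (Finset.sum_le_card_nsmul _ _ _ fun i _ => hu i)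
          (Finset.sum_le_card_nsmul _ _ _ fun i _ => hv i)
    _ = (2 * Fintype.card ι - 1) * M := by
        simp only [nsmul_eq_mul]
        linear_combination M * hcard

theorem one_add_le_two_sub_inv_mul {k s M : ℝ} (hk : 1 ≤ k) (hs : s ≤ 1)
    (hsM : s ≤ (2 * k - 1) * M) : 1 + s ≤ (2 - 1 / k) * (1 + M) := by
  have hk₀ : 0 < k := by linarith
  rw [show (2 - 1 / k) * (1 + M) = (2 * k - 1 + (2 * k - 1) * M) / k by field_simp,
    le_div_iff₀ hk₀]
  nlinarith

namespace KPieceAlloc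

variable {n k : ℕ} (A : KPieceAlloc n k)

theorem lo_mem (i : Fin n) (m : Fin k) : A.lo i m ∈ Icc (0 : ℝ) 1 :=
  A.sub i m ⟨le_rfl, A.le i m⟩

theorem hi_mem (i : Fin n) (m : Fin k) : A.hi i m ∈ Icc (0 : ℝ) 1 :=
  A.sub i m ⟨A.le i m, le_rfl⟩

theorem exists_lo_eq_zero : ∃ i m, A.lo i m = 0 := by
  have h0 : (0 : ℝ) ∈ ⋃ i, ⋃ m, Icc (A.lo i m) (A.hi i m) :=
    A.cover ▸ ⟨le_rfl, zero_le_one⟩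
  simp only [mem_iUnion] at h0
  obtain ⟨i, m, hm⟩ := h0
  exact ⟨i, m, le_antisymm hm.1 (A.lo_mem i m).1⟩

theorem sum_integral_eq {f : ℝ → ℝ} (hf : IntegrableOn f (Icc 0 1)) :
    ∑ p : Fin n × Fin k, ∫ x in A.lo p.1 p.2..A.hi p.1 p.2, f x =
      ∫ x in (0 : ℝ)..1, f x := by
  have hunion : (⋃ p : Fin n × Fin k, Icc (A.lo p.1 p.2) (A.hi p.1 p.2)) = Icc 0 1 := by
    rw [iUnion_prod', A.cover]
  have hdisj : Pairwise (Function.onFun (AEDisjoint volume)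
      fun p : Fin n × Fin k => Icc (A.lo p.1 p.2) (A.hi p.1 p.2)) := fun p q hpq =>
    (disjoint_iff_inter_eq_empty.2 (A.nonoverlap p.1 p.2 q.1 q.2 hpq)).aedisjoint.congr
      Ioo_ae_eq_Icc.symm Ioo_ae_eq_Icc.symm
  rw [integral_of_le zero_le_one, ← integral_Icc_eq_integral_Ioc, ← hunion,
    integral_iUnion_ae (fun _ => measurableSet_Icc.nullMeasurableSet) hdisj (hunion ▸ hf),
    tsum_fintype]
  refine Finset.sum_congr rfl fun p _ => ?_
  rw [integral_of_le (A.le p.1 p.2), integral_Icc_eq_integral_Ioc]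

end KPieceAlloc

namespace CakeInstance

variable {n : ℕ} (C : CakeInstance n)

theorem intervalIntegrable {a b : ℝ} (ha : a ∈ Icc (0 : ℝ) 1) (hb : b ∈ Icc (0 : ℝ) 1)
    (i : Fin n) : IntervalIntegrable (C.d i) volume a b :=
  ((C.cont i).mono (uIcc_subset_Icc ha hb)).intervalIntegrable

theorem ival_add_ival {a b c : ℝ} (ha : a ∈ Icc (0 : ℝ) 1) (hb : b ∈ Icc (0 : ℝ) 1)
    (hc : c ∈ Icc (0 : ℝ) 1) (i : Fin n) : C.ival i a b + C.ival i b c = C.ival i a c :=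
  integral_add_adjacent_intervals (C.intervalIntegrable ha hb i) (C.intervalIntegrable hb hc i)

theorem ival_add_ival_one {t : ℝ} (ht : t ∈ Icc (0 : ℝ) 1) (i : Fin n) :
    C.ival i 0 t + C.ival i t 1 = 1 :=
  (C.ival_add_ival ⟨le_rfl, zero_le_one⟩ ht ⟨zero_le_one, le_rfl⟩ i).trans (C.total i)

theorem continuousOn_ival_zero (i : Fin n) : ContinuousOn (C.ival i 0) (Icc 0 1) := by
  have h := continuousOn_primitive_interval (μ := volume) (a := 0) (b := 1)
    ((uIcc_of_le (zero_le_one' ℝ)).symm ▸ (C.cont i).integrableOn_Icc)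
  rw [uIcc_of_le zero_le_one] at h
  exact h

noncomputable def gap (C : CakeInstance 2) (t : ℝ) : ℝ := C.ival 0 0 t - C.ival 1 0 t

theorem ival_sub_ival_eq_gap_sub_gap (C : CakeInstance 2) {a b : ℝ} (ha : a ∈ Icc (0 : ℝ) 1)
    (hb : b ∈ Icc (0 : ℝ) 1) : C.ival 0 a b - C.ival 1 a b = C.gap b - C.gap a := by
  have h₀ := C.ival_add_ival ⟨le_rfl, zero_le_one⟩ ha hb 0
  have h₁ := C.ival_add_ival ⟨le_rfl, zero_le_one⟩ ha hb 1
  rw [gap, gap]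
  linarith

theorem exists_isMaxOn_abs_gap (C : CakeInstance 2) :
    ∃ t ∈ Icc (0 : ℝ) 1, IsMaxOn (fun x => |C.gap x|) (Icc 0 1) t :=
  isCompact_Icc.exists_isMaxOn (nonempty_Icc.2 zero_le_one)
    ((C.continuousOn_ival_zero 0).sub (C.continuousOn_ival_zero 1)).abs

end CakeInstance

section TwoPlayers

variable {k : ℕ} (C : CakeInstance 2) (A : KPieceAlloc 2 k)

theorem kval_nonneg (i j : Fin 2) : 0 ≤ kval C A i j :=
  Finset.sum_nonneg fun m _ => integral_nonneg (A.le j m)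
    fun x hx => C.nonneg i x (A.sub j m hx)

theorem kval_add_kval (i : Fin 2) : kval C A i 0 + kval C A i 1 = 1 := by
  rw [← C.total i, ← A.sum_integral_eq (C.cont i).integrableOn_Icc, Fintype.sum_prod_type,
    Fin.sum_univ_two]
  rfl

theorem kval_sub_kval_eq_sum_gap (j : Fin 2) :
    kval C A 0 j - kval C A 1 j = ∑ m, (C.gap (A.hi j m) - C.gap (A.lo j m)) := by
  rw [kval, kval, ← Finset.sum_sub_distrib]
  exact Finset.sum_congr rfl fun m _ =>
    C.ival_sub_ival_eq_gap_sub_gap (A.lo_mem j m) (A.hi_mem j m)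

theorem kWelfare_eq_one_add : kWelfare C A = 1 + (kval C A 0 0 - kval C A 1 0) := by
  rw [kWelfare, Fin.sum_univ_two]
  linarith [kval_add_kval C A 1]

theorem kval_sub_kval_le_abs (j : Fin 2) :
    kval C A 0 0 - kval C A 1 0 ≤ |kval C A 0 j - kval C A 1 j| := by
  fin_cases j
  · exact le_abs_self _
  · refine (le_of_eq ?_).trans (neg_le_abs _)
    change _ = -(kval C A 0 1 - kval C A 1 1)
    linarith [kval_add_kval C A 0, kval_add_kval C A 1]

def cutAt {t : ℝ} (ht : t ∈ Icc (0 : ℝ) 1) (σ : Equiv.Perm (Fin 2)) : ContigAlloc 2 where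
  x := ![0, t, 1]
  mono := Fin.monotone_iff_le_succ.2 fun i => by fin_cases i <;> simp [ht.1, ht.2]
  first := rfl
  last := rfl
  σ := σ

theorem cWelfare_cutAt_one {t : ℝ} (ht : t ∈ Icc (0 : ℝ) 1) :
    cWelfare C (cutAt ht 1) = 1 + C.gap t := by
  have h : cWelfare C (cutAt ht 1) = C.ival 0 0 t + C.ival 1 t 1 := by
    simp [cWelfare, cval, cutAt, Fin.sum_univ_two, Equiv.Perm.one_def]
  rw [h, CakeInstance.gap]
  linarith [C.ival_add_ival_one ht 1]

theorem cWelfare_cutAt_swap {t : ℝ} (ht : t ∈ Icc (0 : ℝ) 1) :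
    cWelfare C (cutAt ht (Equiv.swap 0 1)) = 1 - C.gap t := by
  have h : cWelfare C (cutAt ht (Equiv.swap 0 1)) = C.ival 0 t 1 + C.ival 1 0 t := by
    simp [cWelfare, cval, cutAt, Fin.sum_univ_two]
  rw [h, CakeInstance.gap]
  linarith [C.ival_add_ival_one ht 0]

theorem exists_cWelfare_eq_one_add_abs_gap {t : ℝ} (ht : t ∈ Icc (0 : ℝ) 1) :
    ∃ B : ContigAlloc 2, cWelfare C B = 1 + |C.gap t| := by
  rcases le_total 0 (C.gap t) with h | h
  · exact ⟨cutAt ht 1, by rw [cWelfare_cutAt_one, abs_of_nonneg h]⟩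
  · exact ⟨cutAt ht (Equiv.swap 0 1), by
      rw [cWelfare_cutAt_swap, abs_of_nonpos h, sub_eq_add_neg]⟩

end TwoPlayers

theorem poiu_two_upper_bound_general (k : ℕ) (C : CakeInstance 2)
    (A : KPieceAlloc 2 k) :
    ∃ B : ContigAlloc 2, kWelfare C A ≤ (2 - 1/(k:ℝ)) * cWelfare C B := by
  obtain ⟨t, ht, hmax⟩ := C.exists_isMaxOn_abs_gap
  obtain ⟨B, hB⟩ := exists_cWelfare_eq_one_add_abs_gap C ht
  obtain ⟨j, m₀, hm₀⟩ := A.exists_lo_eq_zero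
  have hgap_zero : C.gap (A.lo j m₀) = 0 := by simp [hm₀, CakeInstance.gap, CakeInstance.ival]
  have hk : (1 : ℝ) ≤ k := by exact_mod_cast m₀.pos
  have hs_le_one : kval C A 0 0 - kval C A 1 0 ≤ 1 := by
    linarith [kval_add_kval C A 0, kval_nonneg C A 0 1, kval_nonneg C A 1 0]
  have hs_le : kval C A 0 0 - kval C A 1 0 ≤ (2 * k - 1) * |C.gap t| := by
    calc kval C A 0 0 - kval C A 1 0 ≤ |kval C A 0 j - kval C A 1 j| := kval_sub_kval_le_abs C A j
      _ ≤ (2 * Fintype.card (Fin k) - 1) * |C.gap t| := by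
        rw [kval_sub_kval_eq_sum_gap]
        exact abs_sum_sub_le_of_eq_zero _ _ (fun m => hmax (A.hi_mem j m))
          (fun m => hmax (A.lo_mem j m)) hgap_zero
      _ = (2 * k - 1) * |C.gap t| := by rw [Fintype.card_fin]
  exact ⟨B, hB ▸ kWelfare_eq_one_add C A ▸ one_add_le_two_sub_inv_mul hk hs_le_one hs_le⟩

/-- For every 2-player instance, every `k ≥ 1`, and every `k`-piece
allocation, some contiguous allocation `B` satisfies
`welfare A ≤ (2 − 1/k) · welfare B`; hence `POIU(2,k) ≤ 2 − 1/k`. -/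
theorem poiu_two_upper_bound (k : ℕ) (hk : 1 ≤ k) (C : CakeInstance 2)
    (A : KPieceAlloc 2 k) :
    ∃ B : ContigAlloc 2, kWelfare C A ≤ (2 - 1/(k:ℝ)) * cWelfare C B :=
  poiu_two_upper_bound_general k C A
end

section
/- For every n-player cake-cutting instance in class X(k) and every contiguous allocation A, there exists a contiguous allocation B all of whose cut points belong to the set {c_0, c_1, …, c_{nk}} of boundaries of the owned pieces, and whose utilitarian welfare is at least that of A. -/
open MeasureTheory Set

section AuxLemmas

variable {n k : ℕ}

lemma aux_intable (C : CakeInstance n) (i : Fin n) {u v : ℝ}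
    (hu : u ∈ Set.Icc (0:ℝ) 1) (hv : v ∈ Set.Icc (0:ℝ) 1) :
    IntervalIntegrable (C.d i) MeasureTheory.volume u v := by
  apply ContinuousOn.intervalIntegrable
  apply (C.cont i).mono
  rw [show Set.Icc (0:ℝ) 1 = Set.uIcc 0 1 from (Set.uIcc_of_le (by norm_num)).symm]
  exact Set.uIcc_subset_uIcc (by rw [Set.uIcc_of_le (by norm_num)]; exact hu)
    (by rw [Set.uIcc_of_le (by norm_num)]; exact hv)

lemma aux_nonneg (C : CakeInstance n) (i : Fin n) {u v : ℝ} (h0 : 0 ≤ u) (huv : u ≤ v)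
    (h1 : v ≤ 1) : 0 ≤ C.ival i u v :=
  intervalIntegral.integral_nonneg huv
    (fun t ht => C.nonneg i t ⟨le_trans h0 ht.1, le_trans ht.2 h1⟩)

lemma aux_split (C : CakeInstance n) (i : Fin n) {u v w : ℝ}
    (hu : u ∈ Set.Icc (0:ℝ) 1) (hv : v ∈ Set.Icc (0:ℝ) 1) (hw : w ∈ Set.Icc (0:ℝ) 1) :
    C.ival i u w = C.ival i u v + C.ival i v w := by
  unfold CakeInstance.ival
  rw [intervalIntegral.integral_add_adjacent_intervals (aux_intable C i hu hv)
    (aux_intable C i hv hw)]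

lemma aux_symm (C : CakeInstance n) (i : Fin n) (u v : ℝ) :
    C.ival i u v = -C.ival i v u :=
  intervalIntegral.integral_symm v u

variable {C : CakeInstance n} (W : XkWitness C k)

lemma aux_c_mem (m : Fin (n*k+1)) : W.c m ∈ Set.Icc (0:ℝ) 1 := by
  constructor
  · rw [← W.first]; exact W.mono.monotone (Fin.zero_le m)
  · rw [← W.last]; exact W.mono.monotone (Fin.le_last m)

lemma aux_zero (i : Fin n) (j : Fin (n*k)) (hj : W.owner j ≠ i)
    {u v : ℝ} (h1 : W.c j.castSucc ≤ u) (h2 : u ≤ v) (h3 : v ≤ W.c j.succ) :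
    C.ival i u v = 0 := by
  have hlo := aux_c_mem W j.castSucc
  have hhi := aux_c_mem W j.succ
  have hu : u ∈ Set.Icc (0:ℝ) 1 := ⟨le_trans hlo.1 h1, le_trans (h2.trans h3) hhi.2⟩
  have hv : v ∈ Set.Icc (0:ℝ) 1 := ⟨le_trans hlo.1 (h1.trans h2), le_trans h3 hhi.2⟩
  have e1 : C.ival i (W.c j.castSucc) (W.c j.succ)
      = C.ival i (W.c j.castSucc) u + (C.ival i u v + C.ival i v (W.c j.succ)) := by
    rw [← aux_split C i hu hv hhi, ← aux_split C i hlo hu hhi]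
  have n1 : 0 ≤ C.ival i (W.c j.castSucc) u := aux_nonneg C i hlo.1 h1 hu.2
  have n3 : 0 ≤ C.ival i v (W.c j.succ) := aux_nonneg C i hv.1 h3 hhi.2
  have hz := W.zeroVal i j hj
  have n2a : 0 ≤ C.ival i u v := aux_nonneg C i hu.1 h2 hv.2
  linarith

lemma aux_nk_pos (W : XkWitness C k) : 0 < n*k := by
  by_contra h
  have h0 : n*k = 0 := by omega
  have he : (0 : Fin (n*k+1)) = Fin.last (n*k) := by ext; simp [h0]
  have : W.c 0 = W.c (Fin.last (n*k)) := by rw [he]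
  rw [W.first, W.last] at this; norm_num at this

lemma aux_exists_piece {y : ℝ} (hy0 : 0 ≤ y) (hy1 : y ≤ 1) :
    ∃ m : Fin (n*k), W.c m.castSucc ≤ y ∧ y ≤ W.c m.succ := by
  classical
  have hpos : 0 < n*k := aux_nk_pos W
  set S := Finset.univ.filter (fun m : Fin (n*k) => W.c m.castSucc ≤ y) with hS
  have hmem0 : (⟨0, hpos⟩ : Fin (n*k)) ∈ S := by
    simp only [hS, Finset.mem_filter, Finset.mem_univ, true_and]
    have h00 : (⟨0, hpos⟩ : Fin (n*k)).castSucc = 0 := rfl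
    rw [h00, W.first]; exact hy0
  have hne : S.Nonempty := ⟨_, hmem0⟩
  set m := S.max' hne with hm
  have hmS : m ∈ S := S.max'_mem hne
  have h1 : W.c m.castSucc ≤ y := by
    simpa only [hS, Finset.mem_filter, Finset.mem_univ, true_and] using hmS
  refine ⟨m, h1, ?_⟩
  by_contra h
  push_neg at h
  by_cases hlast : (m : ℕ) + 1 = n*k
  · have hml : m.succ = Fin.last (n*k) := by ext; simpa using hlast
    rw [hml, W.last] at h; linarith
  · have hlt : (m:ℕ)+1 < n*k := lt_of_le_of_ne (by omega) hlast
    have hmem : (⟨(m:ℕ)+1, hlt⟩ : Fin (n*k)) ∈ S := by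
      simp only [hS, Finset.mem_filter, Finset.mem_univ, true_and]
      have hcs : (⟨(m:ℕ)+1, hlt⟩ : Fin (n*k)).castSucc = m.succ := rfl
      rw [hcs]; exact le_of_lt h
    have hle := S.le_max' _ hmem
    rw [← hm] at hle
    rw [Fin.le_def] at hle
    simp at hle

end AuxLemmas

/-- For instances in `X(k)`, any contiguous allocation can be replaced by
one whose cut points all lie on boundaries of owned pieces, without decreasing
utilitarian welfare. -/
theorem cuts_on_boundaries (n k : ℕ) (C : CakeInstance n) (W : XkWitness C k)
    (A : ContigAlloc n) :
    ∃ B : ContigAlloc n,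
      (∀ j : Fin (n+1), ∃ m : Fin (n*k+1), B.x j = W.c m) ∧
      cWelfare C A ≤ cWelfare C B := by
  classical
  have hpos : 0 < n*k := aux_nk_pos W
  have hn : 0 < n := by
    rcases Nat.eq_zero_or_pos n with h | h
    · subst h; simp at hpos
    · exact h
  have hx01 : ∀ t : Fin (n+1), A.x t ∈ Set.Icc (0:ℝ) 1 := fun t =>
    ⟨A.first ▸ A.mono (Fin.zero_le t), A.last ▸ A.mono (Fin.le_last t)⟩
  have hpick : ∀ t : Fin (n+1), ∃ m : Fin (n*k), W.c m.castSucc ≤ A.x t ∧ A.x t ≤ W.c m.succ :=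
    fun t => aux_exists_piece W (hx01 t).1 (hx01 t).2
  choose pk pk1 pk2 using hpick
  set y : Fin (n+1) → ℝ := fun t =>
    if h0 : t = 0 then 0 else if _h : t = Fin.last n then 1 else
      if W.owner (pk t) = A.σ (t.pred h0) then W.c (pk t).succ else W.c (pk t).castSucc
    with hy
  have hy0 : y 0 = 0 := by simp [hy]
  have hylast : y (Fin.last n) = 1 := by
    have h0 : (Fin.last n) ≠ 0 := by
      intro h; have := congrArg Fin.val h; simp at this; omega
    simp [hy, h0]
  have hyc : ∀ t, ∃ m : Fin (n*k+1), y t = W.c m := by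
    intro t
    by_cases h0 : t = 0
    · exact ⟨0, by rw [h0, hy0, W.first]⟩
    by_cases hl : t = Fin.last n
    · exact ⟨Fin.last (n*k), by rw [hl, hylast, W.last]⟩
    by_cases ho : W.owner (pk t) = A.σ (t.pred h0)
    · exact ⟨(pk t).succ, by simp [hy, h0, hl, ho]⟩
    · exact ⟨(pk t).castSucc, by simp [hy, h0, hl, ho]⟩
  have hy01 : ∀ t, y t ∈ Set.Icc (0:ℝ) 1 := by
    intro t; obtain ⟨m, hm⟩ := hyc t; rw [hm]; exact aux_c_mem W m
  set z : Fin (n+1) → ℝ := fun t => (Finset.Iic t).sup' Finset.nonempty_Iic y with hz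
  have hzmono : Monotone z := fun s t hst =>
    Finset.sup'_mono y (Finset.Iic_subset_Iic.mpr hst) Finset.nonempty_Iic
  have hzy : ∀ t, y t ≤ z t := fun t => Finset.le_sup' y (Finset.mem_Iic.mpr le_rfl)
  have hzc : ∀ t, ∃ m : Fin (n*k+1), z t = W.c m := by
    intro t
    obtain ⟨s, hsmem, hse⟩ := Finset.exists_mem_eq_sup' (Finset.nonempty_Iic (a := t)) y
    obtain ⟨m, hm⟩ := hyc s
    exact ⟨m, hse.trans hm⟩
  have hz01 : ∀ t, z t ∈ Set.Icc (0:ℝ) 1 := by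
    intro t; obtain ⟨m, hm⟩ := hzc t; rw [hm]; exact aux_c_mem W m
  have hz0 : z 0 = 0 := by
    apply le_antisymm
    · apply Finset.sup'_le
      intro s hs
      have hs0 : s = 0 := le_antisymm (Finset.mem_Iic.mp hs) (Fin.zero_le s)
      rw [hs0, hy0]
    · rw [← hy0]; exact hzy 0
  have hzlast : z (Fin.last n) = 1 := by
    apply le_antisymm
    · apply Finset.sup'_le
      intro s _
      exact (hy01 s).2
    · rw [← hylast]; exact hzy _
  set B : ContigAlloc n := ⟨z, hzmono, hz0, hzlast, A.σ⟩ with hB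
  refine ⟨B, fun t => hzc t, ?_⟩
  unfold cWelfare
  apply Finset.sum_le_sum
  intro i _
  set j : Fin n := A.σ.symm i with hj
  have hij : A.σ j = i := Equiv.apply_symm_apply _ _
  -- key claims
  have claimR : 0 ≤ C.ival i (A.x j.succ) (z j.succ) := by
    rcases le_or_gt (A.x j.succ) (z j.succ) with h | h
    · exact aux_nonneg C i (hx01 _).1 h (hz01 _).2
    · have hyx : y j.succ < A.x j.succ := lt_of_le_of_lt (hzy _) h
      have ht0 : j.succ ≠ 0 := Fin.succ_ne_zero j
      have htl : j.succ ≠ Fin.last n := by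
        intro he
        rw [he, hylast, A.last] at hyx
        exact lt_irrefl _ hyx
      by_cases ho : W.owner (pk j.succ) = A.σ j
      · have hyv : y j.succ = W.c (pk j.succ).succ := by simp [hy, ht0, htl, ho]
        rw [hyv] at hyx
        exact absurd (pk2 j.succ) (not_le.mpr hyx)
      · have hyv : y j.succ = W.c (pk j.succ).castSucc := by simp [hy, ht0, htl, ho]
        have hne : W.owner (pk j.succ) ≠ i := by
          rw [hij] at ho
          exact ho
        have h0' : C.ival i (z j.succ) (A.x j.succ) = 0 := by
          apply aux_zero W i (pk j.succ) hne
          · rw [← hyv]; exact hzy _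
          · exact le_of_lt h
          · exact pk2 j.succ
        rw [aux_symm C i (A.x j.succ) (z j.succ), h0']
        norm_num
  have claimL : 0 ≤ C.ival i (z j.castSucc) (A.x j.castSucc) := by
    rcases le_or_gt (z j.castSucc) (A.x j.castSucc) with h | h
    · exact aux_nonneg C i (hz01 _).1 h (hx01 _).2
    · obtain ⟨s, hsmem, hse⟩ :=
        Finset.exists_mem_eq_sup' (Finset.nonempty_Iic (a := j.castSucc)) y
      have hzeq : z j.castSucc = y s := hse
      have hst : s ≤ j.castSucc := Finset.mem_Iic.mp hsmem
      have hxs : A.x s ≤ A.x j.castSucc := A.mono hst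
      have hlt : A.x s < y s := lt_of_le_of_lt hxs (hzeq ▸ h)
      have hs0 : s ≠ 0 := by
        intro he; rw [he, hy0, A.first] at hlt; exact lt_irrefl _ hlt
      have hsl : s ≠ Fin.last n := by
        intro he; rw [he, hylast, A.last] at hlt; exact lt_irrefl _ hlt
      by_cases ho : W.owner (pk s) = A.σ (s.pred hs0)
      · have hyv : y s = W.c (pk s).succ := by simp [hy, hs0, hsl, ho]
        have hne : W.owner (pk s) ≠ i := by
          rw [ho]
          intro he
          have he' : s.pred hs0 = j := A.σ.injective (he.trans hij.symm)
          have hv1 : (s.pred hs0 : ℕ) = (s : ℕ) - 1 := rfl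
          have hv2 : (s : ℕ) ≤ (j : ℕ) := by
            have h5 := hst; rw [Fin.le_def] at h5; simpa using h5
          have hv3 : (s : ℕ) ≠ 0 := fun hc => hs0 (Fin.ext hc)
          have hv4 := congrArg Fin.val he'
          rw [hv1] at hv4
          omega
        have h0' : C.ival i (A.x j.castSucc) (z j.castSucc) = 0 := by
          apply aux_zero W i (pk s) hne
          · exact le_trans (pk1 s) hxs
          · exact le_of_lt h
          · rw [hzeq, hyv]
        rw [aux_symm C i (z j.castSucc) (A.x j.castSucc), h0']
        norm_num
      · have hyv : y s = W.c (pk s).castSucc := by simp [hy, hs0, hsl, ho]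
        rw [hyv] at hlt
        exact absurd (pk1 s) (not_le.mpr hlt)
  have hBj : B.σ.symm i = j := rfl
  have hab : A.x j.castSucc ≤ A.x j.succ := A.mono (Fin.castSucc_le_succ j)
  have hsplit : C.ival i (z j.castSucc) (z j.succ)
      = C.ival i (z j.castSucc) (A.x j.castSucc)
        + (C.ival i (A.x j.castSucc) (A.x j.succ) + C.ival i (A.x j.succ) (z j.succ)) := by
    rw [← aux_split C i (hx01 _) (hx01 _) (hz01 _), ← aux_split C i (hz01 _) (hx01 _) (hz01 _)]
  show cval C A i i ≤ cval C B i i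
  unfold cval
  rw [hBj]
  show C.ival i (A.x (A.σ.symm i).castSucc) (A.x (A.σ.symm i).succ)
    ≤ C.ival i (z j.castSucc) (z j.succ)
  rw [← hj]
  linarith
end

section
/- Let a 2-player cake-cutting instance be in class X(k), with interior piece boundaries c_1 < c_2 < … < c_{2k−1}. For c ∈ [0,1] define UW(c) = max( V_1([0,c]) + V_2([c,1]), V_2([0,c]) + V_1([c,1]) ). Then Σ_{j=1}^{2k−1} UW(c_j) ≥ 2k. -/
open MeasureTheory Set

/-- For a 2-player instance in `X(k)` with interior piece boundaries
`c 1 < … < c (2k−1)`, the sum over these boundaries of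
`UW(c) = max(V₁[0,c] + V₂[c,1], V₂[0,c] + V₁[c,1])` is at least `2k`. -/
theorem sum_of_cut_welfares (k : ℕ) (C : CakeInstance 2) (W : XkWitness C k) :
    2 * (k:ℝ) ≤ ∑ j : Fin (2*k - 1),
      max (C.ival 0 0 (W.c ⟨j.1 + 1, by omega⟩) + C.ival 1 (W.c ⟨j.1 + 1, by omega⟩) 1)
          (C.ival 1 0 (W.c ⟨j.1 + 1, by omega⟩) + C.ival 0 (W.c ⟨j.1 + 1, by omega⟩) 1) := by

  -- handle k = 0
  rcases Nat.eq_zero_or_pos k with hk0 | hk0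
  · subst hk0
    have h0 : W.c 0 = 0 := W.first
    have h1 : W.c (Fin.last (2*0)) = 1 := W.last
    have : (0:ℝ) = 1 := by
      rw [← h0, ← h1]; rfl
    norm_num at this
  -- main case
  set c' : ℕ → ℝ := fun j => W.c ⟨min j (2*k), by omega⟩ with hc'def
  have hc' : ∀ (j : ℕ) (h : j ≤ 2*k), c' j = W.c ⟨j, by omega⟩ := by
    intro j h
    simp only [hc'def]
    congr 1
    exact Fin.ext (by simp [Nat.min_eq_left h])
  have hc'0 : c' 0 = 0 := by rw [hc' 0 (by omega)]; exact W.first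
  have hc'N : c' (2*k) = 1 := by
    rw [hc' (2*k) le_rfl]; exact W.last
  have hmem : ∀ (j : ℕ), c' j ∈ Set.Icc (0:ℝ) 1 := by
    intro j
    constructor
    · rw [← W.first]
      exact W.mono.monotone (by simp)
    · rw [← W.last]
      exact W.mono.monotone (by exact Fin.mk_le_mk.mpr (by omega))
  have hmono : ∀ (a b : ℕ), a ≤ b → c' a ≤ c' b := by
    intro a b hab
    exact W.mono.monotone (Fin.mk_le_mk.mpr (by omega))
  have hint : ∀ (i : Fin 2) (a b : ℝ), a ∈ Set.Icc (0:ℝ) 1 → b ∈ Set.Icc (0:ℝ) 1 →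
      IntervalIntegrable (C.d i) MeasureTheory.volume a b := by
    intro i a b ha hb
    exact ((C.cont i).mono (Set.uIcc_subset_Icc ha hb)).intervalIntegrable
  have hnn : ∀ (i : Fin 2) (a b : ℝ), a ∈ Set.Icc (0:ℝ) 1 → b ∈ Set.Icc (0:ℝ) 1 → a ≤ b →
      0 ≤ C.ival i a b := by
    intro i a b ha hb hab
    apply intervalIntegral.integral_nonneg hab
    intro x hx
    exact C.nonneg i x ⟨le_trans ha.1 hx.1, le_trans hx.2 hb.2⟩
  have h01 : (0:ℝ) ∈ Set.Icc (0:ℝ) 1 := by norm_num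
  have h11 : (1:ℝ) ∈ Set.Icc (0:ℝ) 1 := by norm_num
  have hadj : ∀ (i : Fin 2) (a b c : ℝ), a ∈ Set.Icc (0:ℝ) 1 → b ∈ Set.Icc (0:ℝ) 1 →
      c ∈ Set.Icc (0:ℝ) 1 → C.ival i a b + C.ival i b c = C.ival i a c := by
    intro i a b c ha hb hc
    exact intervalIntegral.integral_add_adjacent_intervals (hint i a b ha hb) (hint i b c hb hc)
  have hsplit : ∀ (i : Fin 2) (x : ℝ), x ∈ Set.Icc (0:ℝ) 1 →
      C.ival i 0 x + C.ival i x 1 = 1 := by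
    intro i x hx
    rw [hadj i 0 x 1 h01 hx h11]
    exact C.total i
  set S : ℕ → ℝ := fun j => C.ival 0 0 (c' j) + C.ival 1 (c' j) 1 with hSdef
  have hS0 : S 0 = 1 := by
    simp only [hSdef, hc'0]
    have : C.ival 0 0 0 = 0 := intervalIntegral.integral_same
    rw [this, zero_add]
    exact C.total 1
  have hSN : S (2*k) = 1 := by
    simp only [hSdef, hc'N]
    have : C.ival 1 1 1 = 0 := intervalIntegral.integral_same
    rw [this, add_zero]
    exact C.total 0
  -- step formula
  have hstep : ∀ j, j < 2*k →
      S (j+1) - S j = C.ival 0 (c' j) (c' (j+1)) - C.ival 1 (c' j) (c' (j+1)) := by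
    intro j hj
    have h1 : C.ival 0 0 (c' j) + C.ival 0 (c' j) (c' (j+1)) = C.ival 0 0 (c' (j+1)) :=
      hadj 0 0 (c' j) (c' (j+1)) h01 (hmem j) (hmem (j+1))
    have h2 : C.ival 1 (c' j) (c' (j+1)) + C.ival 1 (c' (j+1)) 1 = C.ival 1 (c' j) 1 :=
      hadj 1 (c' j) (c' (j+1)) 1 (hmem j) (hmem (j+1)) h11
    simp only [hSdef]
    linarith
  -- one of the two values of each piece is zero
  have habs : ∀ j, j < 2*k →
      |S (j+1) - S j| = C.ival 0 (c' j) (c' (j+1)) + C.ival 1 (c' j) (c' (j+1)) := by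
    intro j hj
    have hle : c' j ≤ c' (j+1) := hmono j (j+1) (by omega)
    have hnn0 : 0 ≤ C.ival 0 (c' j) (c' (j+1)) := hnn 0 _ _ (hmem j) (hmem (j+1)) hle
    have hnn1 : 0 ≤ C.ival 1 (c' j) (c' (j+1)) := hnn 1 _ _ (hmem j) (hmem (j+1)) hle
    have hcast : W.c (Fin.castSucc ⟨j, hj⟩) = c' j := (hc' j (by omega)).symm
    have hsucc : W.c (Fin.succ ⟨j, hj⟩) = c' (j+1) := by
      rw [hc' (j+1) (by omega)]; rfl
    rw [hstep j hj]
    rcases Fin.exists_fin_two.mp ⟨W.owner ⟨j, hj⟩, rfl⟩ with ho | ho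
    · have hz : C.ival 1 (W.c (Fin.castSucc ⟨j, hj⟩)) (W.c (Fin.succ ⟨j, hj⟩)) = 0 :=
        W.zeroVal 1 ⟨j, hj⟩ (by rw [ho]; decide)
      rw [hcast, hsucc] at hz
      rw [hz, sub_zero, add_zero, abs_of_nonneg hnn0]
    · have hz : C.ival 0 (W.c (Fin.castSucc ⟨j, hj⟩)) (W.c (Fin.succ ⟨j, hj⟩)) = 0 :=
        W.zeroVal 0 ⟨j, hj⟩ (by rw [ho]; decide)
      rw [hcast, hsucc] at hz
      rw [hz, zero_sub, abs_neg, abs_of_nonneg hnn1, zero_add]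
  -- telescoping: the piece values sum to 2
  have htel : ∑ j ∈ Finset.range (2*k), |S (j+1) - S j| = 2 := by
    have e1 : ∑ j ∈ Finset.range (2*k), |S (j+1) - S j|
        = ∑ j ∈ Finset.range (2*k),
            (C.ival 0 (c' j) (c' (j+1)) + C.ival 1 (c' j) (c' (j+1))) :=
      Finset.sum_congr rfl fun j hj => habs j (Finset.mem_range.mp hj)
    have e2 : ∀ (i : Fin 2), ∑ j ∈ Finset.range (2*k), C.ival i (c' j) (c' (j+1)) = 1 := by
      intro i
      simp only [CakeInstance.ival]
      rw [intervalIntegral.sum_integral_adjacent_intervals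
        (fun j _ => hint i (c' j) (c' (j+1)) (hmem j) (hmem (j+1))), hc'0, hc'N]
      exact C.total i
    rw [e1, Finset.sum_add_distrib, e2 0, e2 1]
    norm_num
  set t : ℕ → ℝ := fun j => S j - 1 with htdef
  have ht0 : t 0 = 0 := by simp [htdef, hS0]
  have htN : t (2*k) = 0 := by simp [htdef, hSN]
  -- the key inequality
  have hA : 1 ≤ ∑ j ∈ Finset.range (2*k - 1), |t (j+1)| := by
    have htri : ∑ j ∈ Finset.range (2*k), |S (j+1) - S j|
        ≤ ∑ j ∈ Finset.range (2*k), (|t j| + |t (j+1)|) := by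
      apply Finset.sum_le_sum
      intro j _
      have h' : S (j+1) - S j = t (j+1) - t j := by simp only [htdef]; ring
      rw [h']
      calc |t (j+1) - t j| ≤ |t (j+1)| + |t j| := abs_sub _ _
        _ = |t j| + |t (j+1)| := by ring
    have hNeq : 2*k = (2*k - 1) + 1 := by omega
    have hs1 : ∑ j ∈ Finset.range (2*k), |t j|
        = ∑ j ∈ Finset.range (2*k - 1), |t (j+1)| := by
      rw [hNeq, Finset.sum_range_succ']
      simp [ht0]
    have hs2 : ∑ j ∈ Finset.range (2*k), |t (j+1)|
        = ∑ j ∈ Finset.range (2*k - 1), |t (j+1)| := by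
      rw [hNeq, Finset.sum_range_succ]
      rw [← hNeq, htN]
      simp
    rw [htel, Finset.sum_add_distrib, hs1, hs2] at htri
    linarith
  -- rewrite each summand
  have hmax : ∀ (j : Fin (2*k - 1)),
      max (C.ival 0 0 (W.c ⟨j.1 + 1, by omega⟩) + C.ival 1 (W.c ⟨j.1 + 1, by omega⟩) 1)
          (C.ival 1 0 (W.c ⟨j.1 + 1, by omega⟩) + C.ival 0 (W.c ⟨j.1 + 1, by omega⟩) 1)
        = 1 + |t (j.1 + 1)| := by
    intro j
    have hj1 : j.1 + 1 ≤ 2*k := by omega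
    have hcj : W.c (⟨j.1 + 1, by omega⟩ : Fin (2*k+1)) = c' (j.1 + 1) := (hc' _ hj1).symm
    have hm := hmem (j.1 + 1)
    have hsplit0 := hsplit 0 (c' (j.1+1)) hm
    have hsplit1 := hsplit 1 (c' (j.1+1)) hm
    rw [hcj]
    have hfirst : C.ival 0 0 (c' (j.1+1)) + C.ival 1 (c' (j.1+1)) 1 = S (j.1+1) := rfl
    have hsecond : C.ival 1 0 (c' (j.1+1)) + C.ival 0 (c' (j.1+1)) 1 = 2 - S (j.1+1) := by
      simp only [hSdef]
      linarith
    rw [hfirst, hsecond]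
    rcases le_total (S (j.1+1)) 1 with h | h
    · rw [max_eq_right (by linarith), abs_of_nonpos (by simp [htdef]; linarith)]
      simp [htdef]; ring
    · rw [max_eq_left (by linarith), abs_of_nonneg (by simp [htdef]; linarith)]
      simp [htdef]
  calc 2 * (k:ℝ) = (2*k - 1 : ℕ) + 1 := by
        have : (2*k - 1 : ℕ) = 2*k - 1 := rfl
        push_cast [Nat.cast_sub (by omega : 1 ≤ 2*k)]
        ring
    _ ≤ (2*k - 1 : ℕ) + ∑ j ∈ Finset.range (2*k - 1), |t (j+1)| := by linarith
    _ = ∑ j ∈ Finset.range (2*k - 1), (1 + |t (j+1)|) := by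
        rw [Finset.sum_add_distrib]
        simp
    _ = ∑ j : Fin (2*k - 1), (1 + |t (j.1+1)|) := (Fin.sum_univ_eq_sum_range _ _).symm
    _ = _ := by
        apply Finset.sum_congr rfl
        intro j _
        exact (hmax j).symm
end

section
/- For every 2-player cake-cutting instance in class X(k), there exists a contiguous allocation whose utilitarian welfare is at least 2k/(2k−1). -/
open MeasureTheory Set

private lemma mono3 {t : ℝ} (h0 : 0 ≤ t) (h1 : t ≤ 1) :
    Monotone (![0, t, 1] : Fin 3 → ℝ) := by
  rw [Fin.monotone_iff_le_succ]
  intro i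
  fin_cases i <;> simpa

private lemma welfare_id (C : CakeInstance 2) (t : ℝ) (h0 : 0 ≤ t) (h1 : t ≤ 1) :
    cWelfare C ⟨![0,t,1], mono3 h0 h1, rfl, rfl, Equiv.refl _⟩ =
      C.ival 0 0 t + C.ival 1 t 1 := by
  simp [cWelfare, cval, Fin.sum_univ_two]

private lemma welfare_swap (C : CakeInstance 2) (t : ℝ) (h0 : 0 ≤ t) (h1 : t ≤ 1) :
    cWelfare C ⟨![0,t,1], mono3 h0 h1, rfl, rfl, Equiv.swap 0 1⟩ =
      C.ival 0 t 1 + C.ival 1 0 t := by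
  simp [cWelfare, cval, Fin.sum_univ_two, Equiv.swap_apply_left, Equiv.swap_apply_right]
/-- Every 2-player instance in `X(k)` admits a contiguous allocation of
utilitarian welfare at least `2k/(2k−1)`. -/
theorem contiguous_welfare_lower_bound (k : ℕ) (C : CakeInstance 2) (W : XkWitness C k) :
    ∃ B : ContigAlloc 2, (2*k : ℝ) / (2*(k:ℝ) - 1) ≤ cWelfare C B := by
  rcases Nat.eq_zero_or_pos k with hk0 | hk0
  · subst hk0
    have h01 : (0:ℝ) = 1 := W.first.symm.trans W.last
    norm_num at h01
  have hN2 : 2 ≤ 2 * k := by omega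
  have hlt : ∀ m : ℕ, min m (2*k) < 2 * k + 1 := fun m => by omega
  set cc : ℕ → ℝ := fun m => W.c ⟨min m (2*k), hlt m⟩ with hcc
  have cc_eq : ∀ (m : ℕ) (h : m < 2*k+1), cc m = W.c ⟨m, h⟩ := by
    intro m h
    simp only [hcc]
    congr 1
    ext
    simp only []
    omega
  have cc_mono : Monotone cc := by
    intro a b hab
    exact W.mono.monotone (by simp [Fin.le_def]; omega)
  have cc0 : cc 0 = 0 := by rw [cc_eq 0 (by omega)]; exact W.first
  have ccN : cc (2*k) = 1 := by rw [cc_eq (2*k) (by omega)]; exact W.last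
  have cc_mem : ∀ m, cc m ∈ Set.Icc (0:ℝ) 1 := by
    intro m
    constructor
    · rw [← W.first]; exact W.mono.monotone (Fin.zero_le _)
    · rw [← W.last]; exact W.mono.monotone (Fin.le_last _)
  have hint : ∀ (i : Fin 2) (a b : ℝ), a ∈ Set.Icc (0:ℝ) 1 → b ∈ Set.Icc (0:ℝ) 1 →
      IntervalIntegrable (C.d i) MeasureTheory.volume a b := by
    intro i a b ha hb
    exact ((C.cont i).mono (Set.uIcc_subset_Icc ha hb)).intervalIntegrable
  set v : Fin 2 → ℕ → ℝ := fun i l => C.ival i (cc l) (cc (l+1)) with hv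
  have v_nonneg : ∀ i l, 0 ≤ v i l := by
    intro i l
    apply intervalIntegral.integral_nonneg (cc_mono (Nat.le_succ l))
    intro x hx
    exact C.nonneg i x ⟨le_trans (cc_mem l).1 hx.1, le_trans hx.2 (cc_mem (l+1)).2⟩
  have telesc : ∀ (i : Fin 2) (j : ℕ),
      ∑ l ∈ Finset.range j, v i l = C.ival i (cc 0) (cc j) := by
    intro i j
    exact intervalIntegral.sum_integral_adjacent_intervals
      (fun l _ => hint i _ _ (cc_mem l) (cc_mem (l+1)))
  have total : ∀ i : Fin 2, ∑ l ∈ Finset.range (2*k), v i l = 1 := by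
    intro i
    rw [telesc, cc0, ccN]
    exact C.total i
  have vzero : ∀ (l : ℕ), l < 2*k → v 0 l = 0 ∨ v 1 l = 0 := by
    intro l hl
    have e1 : cc l = W.c (Fin.castSucc ⟨l, hl⟩) := by
      rw [cc_eq l (by omega)]; rfl
    have e2 : cc (l+1) = W.c (Fin.succ ⟨l, hl⟩) := by
      rw [cc_eq (l+1) (by omega)]; rfl
    by_cases ho : W.owner ⟨l, hl⟩ = 0
    · right
      have hz := W.zeroVal 1 ⟨l, hl⟩ (by rw [ho]; decide)
      simp only [hv]; rw [e1, e2]; exact hz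
    · left
      have ho1 : W.owner ⟨l, hl⟩ ≠ 0 := ho
      have hz := W.zeroVal 0 ⟨l, hl⟩ ho1
      simp only [hv]; rw [e1, e2]; exact hz
  set S : Fin 2 → ℕ → ℝ := fun i j => ∑ l ∈ Finset.range j, v i l with hS
  set g : ℕ → ℝ := fun j => S 0 j - S 1 j with hg
  have g0 : g 0 = 0 := by simp [hg, hS]
  have gN : g (2*k) = 0 := by simp only [hg, hS]; rw [total 0, total 1]; ring
  have step : ∀ j, j < 2*k → |g (j+1) - g j| = v 0 j + v 1 j := by
    intro j hj
    have hd : g (j+1) - g j = v 0 j - v 1 j := by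
      simp only [hg, hS, Finset.sum_range_succ]; ring
    rw [hd]
    rcases vzero j hj with h | h
    · rw [h, abs_of_nonpos (by linarith [v_nonneg 1 j])]; ring
    · rw [h, abs_of_nonneg (by linarith [v_nonneg 0 j])]; ring
  have sum2 : ∑ j ∈ Finset.range (2*k), |g (j+1) - g j| = 2 := by
    rw [Finset.sum_congr rfl (fun j hj => step j (Finset.mem_range.mp hj))]
    rw [Finset.sum_add_distrib, total 0, total 1]; norm_num
  have tri : ∀ j : ℕ, |g (j+1) - g j| ≤ |g (j+1)| + |g j| := by
    intro j
    calc |g (j+1) - g j| = |g (j+1) + -(g j)| := by rw [sub_eq_add_neg]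
      _ ≤ |g (j+1)| + |-(g j)| := abs_add_le _ _
      _ = |g (j+1)| + |g j| := by rw [abs_neg]
  have shift : ∑ j ∈ Finset.range (2*k), |g (j+1)| = ∑ j ∈ Finset.range (2*k), |g j| := by
    have h1 : ∑ j ∈ Finset.range (2*k+1), |g j|
        = (∑ j ∈ Finset.range (2*k), |g (j+1)|) + |g 0| := Finset.sum_range_succ' _ _
    have h2 : ∑ j ∈ Finset.range (2*k+1), |g j|
        = (∑ j ∈ Finset.range (2*k), |g j|) + |g (2*k)| := Finset.sum_range_succ _ _
    rw [g0, abs_zero, add_zero] at h1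
    rw [gN, abs_zero, add_zero] at h2
    rw [← h1, h2]
  have hsum1 : (1:ℝ) ≤ ∑ j ∈ Finset.range (2*k), |g j| := by
    have hle : (2:ℝ) ≤ ∑ j ∈ Finset.range (2*k), (|g (j+1)| + |g j|) := by
      rw [← sum2]; exact Finset.sum_le_sum (fun j _ => tri j)
    rw [Finset.sum_add_distrib, shift] at hle
    linarith
  have hsum1' : (1:ℝ) ≤ ∑ j ∈ Finset.range (2*k-1), |g (j+1)| := by
    have hsplit : ∑ j ∈ Finset.range (2*k), |g j|
        = (∑ j ∈ Finset.range (2*k-1), |g (j+1)|) + |g 0| := by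
      rw [show 2*k = (2*k-1)+1 by omega]
      exact Finset.sum_range_succ' _ _
    rw [hsplit, g0, abs_zero, add_zero] at hsum1
    exact hsum1
  obtain ⟨j0, _, hgj0⟩ : ∃ j ∈ Finset.range (2*k-1), 1/(2*(k:ℝ) - 1) ≤ |g (j+1)| := by
    by_contra hcon
    push_neg at hcon
    have hne : (Finset.range (2*k-1)).Nonempty := ⟨0, by simp; omega⟩
    have hlt2 := Finset.sum_lt_sum_of_nonempty hne hcon
    rw [Finset.sum_const, Finset.card_range, nsmul_eq_mul] at hlt2
    have hcast : ((2*k-1 : ℕ) : ℝ) = 2*(k:ℝ) - 1 := by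
      have : (1:ℕ) ≤ 2*k := by omega
      push_cast [this]
      ring
    have hdpos : (0:ℝ) < 2*(k:ℝ) - 1 := by
      have : (1:ℝ) ≤ (k:ℝ) := by exact_mod_cast hk0
      linarith
    rw [hcast, mul_one_div, div_self (ne_of_gt hdpos)] at hlt2
    linarith
  have hdpos : (0:ℝ) < 2*(k:ℝ) - 1 := by
    have : (1:ℝ) ≤ (k:ℝ) := by exact_mod_cast hk0
    linarith
  have hgd : 1 ≤ |g (j0+1)| * (2*(k:ℝ) - 1) := by
    rw [← div_le_iff₀ hdpos] at *
    · exact hgj0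
  set t : ℝ := cc (j0+1) with hct
  have ht0 : (0:ℝ) ≤ t := (cc_mem _).1
  have ht1 : t ≤ 1 := (cc_mem _).2
  have ivalL : ∀ i : Fin 2, C.ival i 0 t = S i (j0+1) := by
    intro i
    rw [← cc0]
    exact (telesc i (j0+1)).symm
  have ivalR : ∀ i : Fin 2, C.ival i t 1 = 1 - S i (j0+1) := by
    intro i
    have hadd : C.ival i 0 t + C.ival i t 1 = C.ival i 0 1 :=
      intervalIntegral.integral_add_adjacent_intervals
        (hint i _ _ (by norm_num) (cc_mem _)) (hint i _ _ (cc_mem _) (by norm_num))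
    have h1 : C.ival i 0 1 = 1 := C.total i
    have := ivalL i
    linarith [hadd, h1, this]
  rcases le_or_gt 0 (g (j0+1)) with hsgn | hsgn
  · refine ⟨⟨![0, t, 1], mono3 ht0 ht1, rfl, rfl, Equiv.refl _⟩, ?_⟩
    rw [welfare_id C t ht0 ht1, ivalL 0, ivalR 1]
    rw [abs_of_nonneg hsgn] at hgd
    have hgdef : g (j0+1) = S 0 (j0+1) - S 1 (j0+1) := rfl
    rw [div_le_iff₀ hdpos]
    nlinarith [hgd, hgdef]
  · refine ⟨⟨![0, t, 1], mono3 ht0 ht1, rfl, rfl, Equiv.swap 0 1⟩, ?_⟩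
    rw [welfare_swap C t ht0 ht1, ivalR 0, ivalL 1]
    rw [abs_of_neg hsgn] at hgd
    have hgdef : g (j0+1) = S 0 (j0+1) - S 1 (j0+1) := rfl
    rw [div_le_iff₀ hdpos]
    nlinarith [hgd, hgdef]
end

section
/- Let an n-player cake-cutting instance be in class X(k), and let (A_1,…,A_n) be an envy-free contiguous allocation in which some player i's interval A_i intersects the interior of a piece P owned by i but does not contain P, with V_i(P \ A_i) > 0. Then there exists an envy-free contiguous allocation with strictly greater utilitarian welfare. In particular, an envy-free contiguous allocation of maximal utilitarian welfare never gives any player only a part (of positive remaining value) of a piece owned by him. -/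
open MeasureTheory Set

/-!
Stretch player `i`'s interval `[a, b]` to `[min a c, max b d]`, where `[c, d]` is the piece he
owns, by pushing every cut point left of him down to `c` and every one right of him up to `d`.
The other intervals only lose parts of `[c, d]`, which the other players value at `0`; so their
values, and hence their lack of envy, are unchanged. Player `i` loses nothing he values in the
others' intervals and gains `V_i([c, d] \ [a, b]) > 0` in his own.
-/

namespace CakeInstance

variable {n : ℕ} (C : CakeInstance n) (i : Fin n)

theorem intervalIntegrable_d {a b : ℝ} (ha : a ∈ Icc (0:ℝ) 1) (hb : b ∈ Icc (0:ℝ) 1) :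
    IntervalIntegrable (C.d i) volume a b :=
  ((C.cont i).mono (uIcc_subset_Icc ha hb)).intervalIntegrable

theorem integrableOn_d {s : Set ℝ} (hs : s ⊆ Icc 0 1) : IntegrableOn (C.d i) s :=
  (C.cont i).integrableOn_Icc.mono_set hs

theorem ival_add {a b c : ℝ} (ha : a ∈ Icc (0:ℝ) 1) (hb : b ∈ Icc (0:ℝ) 1)
    (hc : c ∈ Icc (0:ℝ) 1) : C.ival i a b + C.ival i b c = C.ival i a c :=
  intervalIntegral.integral_add_adjacent_intervals
    (C.intervalIntegrable_d i ha hb) (C.intervalIntegrable_d i hb hc)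

theorem ival_self (a : ℝ) : C.ival i a a = 0 := intervalIntegral.integral_same

theorem ival_symm (a b : ℝ) : C.ival i b a = -C.ival i a b := intervalIntegral.integral_symm a b

theorem ival_nonneg {a b : ℝ} (ha : a ∈ Icc (0:ℝ) 1) (hb : b ∈ Icc (0:ℝ) 1) (hab : a ≤ b) :
    0 ≤ C.ival i a b :=
  intervalIntegral.integral_nonneg hab fun x hx => C.nonneg i x ⟨ha.1.trans hx.1, hx.2.trans hb.2⟩

theorem ival_mono {u v u' v' : ℝ} (hu : u ∈ Icc (0:ℝ) 1) (hv : v ∈ Icc (0:ℝ) 1)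
    (huu' : u ≤ u') (hu'v' : u' ≤ v') (hv'v : v' ≤ v) : C.ival i u' v' ≤ C.ival i u v := by
  have hu' : u' ∈ Icc (0:ℝ) 1 := ⟨hu.1.trans huu', hu'v'.trans (hv'v.trans hv.2)⟩
  have hv' : v' ∈ Icc (0:ℝ) 1 := ⟨hu'.1.trans hu'v', hv'v.trans hv.2⟩
  rw [← C.ival_add i hu hu' hv, ← C.ival_add i hu' hv' hv]
  linarith [C.ival_nonneg i hu hu' huu', C.ival_nonneg i hv' hv hv'v]

theorem ival_eq_zero_of_mem {c d u v : ℝ} (hc : c ∈ Icc (0:ℝ) 1) (hd : d ∈ Icc (0:ℝ) 1)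
    (hzero : C.ival i c d = 0) (hu : u ∈ Icc c d) (hv : v ∈ Icc c d) : C.ival i u v = 0 := by
  have key : ∀ {u v : ℝ}, u ∈ Icc c d → v ∈ Icc c d → u ≤ v → C.ival i u v = 0 := by
    intro u v hu hv huv
    have hu01 : u ∈ Icc (0:ℝ) 1 := ⟨hc.1.trans hu.1, hu.2.trans hd.2⟩
    have hv01 : v ∈ Icc (0:ℝ) 1 := ⟨hc.1.trans hv.1, hv.2.trans hd.2⟩
    exact le_antisymm (hzero ▸ C.ival_mono i hc hd hu.1 huv hv.2) (C.ival_nonneg i hu01 hv01 huv)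
  rcases le_total u v with huv | hvu
  · exact key hu hv huv
  · rw [ival_symm, key hv hu hvu, neg_zero]

theorem ival_eq_of_ival_eq_zero {u v u' v' : ℝ} (hu : u ∈ Icc (0:ℝ) 1) (hv : v ∈ Icc (0:ℝ) 1)
    (hu' : u' ∈ Icc (0:ℝ) 1) (hv' : v' ∈ Icc (0:ℝ) 1)
    (hzu : C.ival i u' u = 0) (hzv : C.ival i v' v = 0) : C.ival i u' v' = C.ival i u v := by
  rw [← C.ival_add i hu' hu hv', ← C.ival_add i hu hv hv', hzu, C.ival_symm i v' v, hzv]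
  ring

theorem ival_min_le {u v : ℝ} (c : ℝ) (hu : u ∈ Icc (0:ℝ) 1) (hv : v ∈ Icc (0:ℝ) 1)
    (huv : u ≤ v) : C.ival i (min u c) (min v c) ≤ C.ival i u v := by
  rcases le_total u c with huc | hcu
  · rw [min_eq_left huc]
    exact C.ival_mono i hu hv le_rfl (le_min huv huc) (min_le_left v c)
  · rw [min_eq_right hcu, min_eq_right (hcu.trans huv), ival_self]
    exact C.ival_nonneg i hu hv huv

theorem ival_max_le {u v : ℝ} (d : ℝ) (hu : u ∈ Icc (0:ℝ) 1) (hv : v ∈ Icc (0:ℝ) 1)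
    (huv : u ≤ v) : C.ival i (max u d) (max v d) ≤ C.ival i u v := by
  rcases le_total d v with hdv | hvd
  · rw [max_eq_left hdv]
    exact C.ival_mono i hu hv (le_max_left u d) (max_le huv hdv) le_rfl
  · rw [max_eq_right hvd, max_eq_right (huv.trans hvd), ival_self]
    exact C.ival_nonneg i hu hv huv

theorem sval_Icc {a b : ℝ} (hab : a ≤ b) : C.sval i (Icc a b) = C.ival i a b := by
  rw [sval, ival, intervalIntegral.integral_of_le hab, integral_Icc_eq_integral_Ioc]

theorem ival_min_max {a b c d : ℝ} (ha : 0 ≤ a) (hb : b ≤ 1) (hc : 0 ≤ c) (hd : d ≤ 1)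
    (hab : a ≤ b) (hcb : c ≤ b) (had : a ≤ d) :
    C.ival i (min a c) (max b d) = C.sval i (Icc c d \ Icc a b) + C.ival i a b := by
  rw [← C.sval_Icc i ((min_le_left a c).trans (hab.trans (le_max_left b d))),
    ← Icc_union_Icc' hcb had, union_comm, ← sdiff_union_self, sval,
    setIntegral_union disjoint_sdiff_left measurableSet_Icc
      (C.integrableOn_d i fun x hx => ⟨hc.trans hx.1.1, hx.1.2.trans hd⟩)
      (C.integrableOn_d i fun x hx => ⟨ha.trans hx.1, hx.2.trans hb⟩),
    ← sval, ← sval, C.sval_Icc i hab]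

end CakeInstance

theorem XkWitness.c_mem_Icc {n k : ℕ} {C : CakeInstance n} (W : XkWitness C k)
    (s : Fin (n*k+1)) : W.c s ∈ Icc (0:ℝ) 1 :=
  ⟨W.first ▸ W.mono.monotone (Fin.zero_le s), W.last ▸ W.mono.monotone (Fin.le_last s)⟩

namespace ContigAlloc

variable {n : ℕ} (A : ContigAlloc n)

theorem x_mem_Icc (t : Fin (n+1)) : A.x t ∈ Icc (0:ℝ) 1 :=
  ⟨A.first ▸ A.mono (Fin.zero_le t), A.last ▸ A.mono (Fin.le_last t)⟩

def widenCuts (i : Fin n) (c d : ℝ) (t : Fin (n+1)) : ℝ :=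
  if t ≤ (A.σ.symm i).castSucc then min (A.x t) c else max (A.x t) d

variable {A} {i : Fin n} {c d : ℝ}

theorem widenCuts_mono (hcd : c ≤ d) : Monotone (A.widenCuts i c d) := by
  intro s t hst
  unfold widenCuts
  split_ifs with hs ht ht
  · exact min_le_min (A.mono hst) le_rfl
  · exact (min_le_right _ _).trans (hcd.trans (le_max_right _ _))
  · exact absurd (hst.trans ht) hs
  · exact max_le_max (A.mono hst) le_rfl

theorem widenCuts_mem_Icc (hc : 0 ≤ c) (hd : d ≤ 1) (t : Fin (n+1)) :
    A.widenCuts i c d t ∈ Icc (0:ℝ) 1 := by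
  have ht := A.x_mem_Icc t
  unfold widenCuts
  split_ifs
  · exact ⟨le_min ht.1 hc, (min_le_left _ _).trans ht.2⟩
  · exact ⟨ht.1.trans (le_max_left _ _), max_le ht.2 hd⟩

variable (A i c d)

def widen (hcd : c ≤ d) (hc : 0 ≤ c) (hd : d ≤ 1) : ContigAlloc n where
  x := A.widenCuts i c d
  mono := widenCuts_mono hcd
  first := by simp only [widenCuts, if_pos (Fin.zero_le _), A.first, min_eq_left hc]
  last := by
    simp only [widenCuts, if_neg (not_le.2 (Fin.castSucc_lt_last _)), A.last, max_eq_left hd]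
  σ := A.σ

variable {A i c d} (C : CakeInstance n) (hcd : c ≤ d) (hc : 0 ≤ c) (hd : d ≤ 1)

theorem cval_widen_self (ℓ : Fin n) :
    cval C (A.widen i c d hcd hc hd) ℓ i
      = C.ival ℓ (min (A.x (A.σ.symm i).castSucc) c) (max (A.x (A.σ.symm i).succ) d) := by
  simp only [cval, widen, widenCuts, le_rfl, if_true,
    if_neg (not_le.2 (Fin.castSucc_lt_succ : (A.σ.symm i).castSucc < _))]

theorem cval_widen_le (ℓ : Fin n) {m : Fin n} (hm : m ≠ i) :
    cval C (A.widen i c d hcd hc hd) ℓ m ≤ cval C A ℓ m := by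
  have hq : A.σ.symm m ≠ A.σ.symm i := A.σ.symm.injective.ne hm
  have hle := A.mono (Fin.castSucc_le_succ (A.σ.symm m))
  simp only [cval, widen, widenCuts]
  rcases lt_or_gt_of_ne hq with hlt | hgt
  · rw [if_pos (Fin.castSucc_le_castSucc_iff.mpr hlt.le),
      if_pos (Fin.succ_le_castSucc_iff.mpr hlt)]
    exact C.ival_min_le ℓ c (A.x_mem_Icc _) (A.x_mem_Icc _) hle
  · rw [if_neg (not_le.2 (Fin.castSucc_lt_castSucc_iff.mpr hgt)),
      if_neg (not_le.2 ((Fin.castSucc_lt_castSucc_iff.mpr hgt).trans_le (Fin.castSucc_le_succ _)))]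
    exact C.ival_max_le ℓ d (A.x_mem_Icc _) (A.x_mem_Icc _) hle

theorem cval_widen_eq {ℓ : Fin n} (hzero : C.ival ℓ c d = 0)
    (hcb : c ≤ A.x (A.σ.symm i).succ) (had : A.x (A.σ.symm i).castSucc ≤ d) (m : Fin n) :
    cval C (A.widen i c d hcd hc hd) ℓ m = cval C A ℓ m := by
  have hc01 : c ∈ Icc (0:ℝ) 1 := ⟨hc, hcd.trans hd⟩
  have hd01 : d ∈ Icc (0:ℝ) 1 := ⟨hc.trans hcd, hd⟩
  have hmoved : ∀ t, C.ival ℓ (A.widenCuts i c d t) (A.x t) = 0 := by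
    intro t
    unfold widenCuts
    split_ifs with ht
    · rcases le_total (A.x t) c with hxc | hcx
      · rw [min_eq_left hxc, C.ival_self]
      · rw [min_eq_right hcx]
        exact C.ival_eq_zero_of_mem ℓ hc01 hd01 hzero ⟨le_rfl, hcd⟩
          ⟨hcx, (A.mono ht).trans had⟩
    · rcases le_total d (A.x t) with hdx | hxd
      · rw [max_eq_left hdx, C.ival_self]
      · rw [max_eq_right hxd]
        exact C.ival_eq_zero_of_mem ℓ hc01 hd01 hzero ⟨hcd, le_rfl⟩
          ⟨hcb.trans (A.mono (Fin.castSucc_lt_iff_succ_le.mp (not_le.1 ht))), hxd⟩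
  exact C.ival_eq_of_ival_eq_zero ℓ (A.x_mem_Icc _) (A.x_mem_Icc _)
    (widenCuts_mem_Icc hc hd _) (widenCuts_mem_Icc hc hd _) (hmoved _) (hmoved _)

end ContigAlloc

section Improvement

variable {n : ℕ} {C : CakeInstance n} {A B : ContigAlloc n} {i : Fin n}

theorem cEnvyFree_of_improvement (hA : cEnvyFree C A)
    (hothers : ∀ ℓ, ℓ ≠ i → ∀ m, cval C B ℓ m = cval C A ℓ m)
    (hless : ∀ m, m ≠ i → cval C B i m ≤ cval C A i m) (hgain : cval C A i i ≤ cval C B i i) :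
    cEnvyFree C B := by
  intro ℓ m
  by_cases hℓ : ℓ = i
  · subst hℓ
    by_cases hm : m = ℓ
    · rw [hm]
    · exact (hless m hm).trans ((hA ℓ m).trans hgain)
  · rw [hothers ℓ hℓ m, hothers ℓ hℓ ℓ]
    exact hA ℓ m

theorem cWelfare_lt_of_improvement (hothers : ∀ ℓ, ℓ ≠ i → cval C B ℓ ℓ = cval C A ℓ ℓ)
    (hgain : cval C A i i < cval C B i i) : cWelfare C A < cWelfare C B := by
  refine Finset.sum_lt_sum (fun ℓ _ => ?_) ⟨i, Finset.mem_univ i, hgain⟩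
  by_cases hℓ : ℓ = i
  · exact hℓ ▸ hgain.le
  · exact (hothers ℓ hℓ).ge

end Improvement

theorem partial_own_piece_not_optimal_general (n k : ℕ) (C : CakeInstance n) (W : XkWitness C k)
    (A : ContigAlloc n) (hA : cEnvyFree C A)
    (i : Fin n) (j : Fin (n*k)) (hown : W.owner j = i)
    (hmeet : (cpiece A i ∩ Set.Ioo (W.c j.castSucc) (W.c j.succ)).Nonempty)
    (hval : 0 < C.sval i (W.pieceSet j \ cpiece A i)) :
    ∃ B : ContigAlloc n, cEnvyFree C B ∧ cWelfare C A < cWelfare C B := by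
  obtain ⟨y, ⟨hay, hyb⟩, hcy, hyd⟩ := hmeet
  have hcd : W.c j.castSucc ≤ W.c j.succ := (W.mono Fin.castSucc_lt_succ).le
  have hcb := (hcy.trans_le hyb).le
  have had := (hay.trans_lt hyd).le
  set B := A.widen i _ _ hcd (W.c_mem_Icc _).1 (W.c_mem_Icc _).2
  have hothers : ∀ ℓ, ℓ ≠ i → ∀ m, cval C B ℓ m = cval C A ℓ m := fun ℓ hℓ =>
    ContigAlloc.cval_widen_eq C hcd _ _ (W.zeroVal ℓ j (hown ▸ hℓ.symm)) hcb had
  have hgain : cval C A i i < cval C B i i := by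
    rw [ContigAlloc.cval_widen_self, C.ival_min_max i (A.x_mem_Icc _).1 (A.x_mem_Icc _).2
      (W.c_mem_Icc _).1 (W.c_mem_Icc _).2 (A.mono (Fin.castSucc_le_succ _)) hcb had]
    exact lt_add_of_pos_left _ hval
  have hless : ∀ m, m ≠ i → cval C B i m ≤ cval C A i m := fun m hm =>
    ContigAlloc.cval_widen_le C _ _ _ i hm
  exact ⟨B, cEnvyFree_of_improvement hA hothers hless hgain.le,
    cWelfare_lt_of_improvement (fun ℓ hℓ => hothers ℓ hℓ ℓ) hgain⟩

/-- In an instance in `X(k)`, if an envy-free contiguous allocation gives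
player `i` an interval meeting the interior of a piece he owns, without containing that
piece and leaving behind a part of positive value to `i`, then some envy-free contiguous
allocation has strictly greater utilitarian welfare. -/
theorem partial_own_piece_not_optimal (n k : ℕ) (C : CakeInstance n) (W : XkWitness C k)
    (A : ContigAlloc n) (hA : cEnvyFree C A)
    (i : Fin n) (j : Fin (n*k)) (hown : W.owner j = i)
    (hmeet : (cpiece A i ∩ Set.Ioo (W.c j.castSucc) (W.c j.succ)).Nonempty)
    (hnsub : ¬ W.pieceSet j ⊆ cpiece A i)
    (hval : 0 < C.sval i (W.pieceSet j \ cpiece A i)) :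
    ∃ B : ContigAlloc n, cEnvyFree C B ∧ cWelfare C A < cWelfare C B :=
  partial_own_piece_not_optimal_general n k C W A hA i j hown hmeet hval
end

section
/- For every integer n ≥ 2 and every real δ > 0, there exists an n-player cake-cutting instance in class X(n) such that (i) the n-piece allocation giving each player exactly his n owned pieces is envy-free and has egalitarian welfare 1, and (ii) every envy-free contiguous allocation has egalitarian welfare at most 1/n + δ. Consequently POIE_f(n,k) = n for k ≥ n. -/
open MeasureTheory Set

/-! Cut `[0,1]` into `n²` equal pieces and let player `0` own pieces `0, n+1, 2(n+1), …`, so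
that the gap between two consecutive pieces of player `0` is filled by all `n` pieces of one
other player. Each player spreads mass `1/n` over each of his pieces by a continuous bump vanishing
at the ends, so giving everybody his own pieces yields value `1` to all. In a contiguous
allocation player `0` gets more than `1/n` only if his interval meets the interiors of two of his
pieces; it then contains a whole gap, and the player owning that gap gets `0`. -/

noncomputable def unitBump (u v x : ℝ) : ℝ := 6 / (v - u) ^ 3 * max 0 ((x - u) * (v - x))

section UnitBump

variable {u v a b : ℝ}

lemma continuous_unitBump (u v : ℝ) : Continuous (unitBump u v) := by
  unfold unitBump; fun_prop

lemma unitBump_nonneg (huv : u ≤ v) (x : ℝ) : 0 ≤ unitBump u v x :=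
  mul_nonneg (by have := sub_nonneg.2 huv; positivity) (le_max_left _ _)

lemma unitBump_eq_zero (huv : u ≤ v) {x : ℝ} (hx : x ∉ Ioo u v) : unitBump u v x = 0 := by
  have : (x - u) * (v - x) ≤ 0 := by
    rw [mem_Ioo, not_and_or, not_lt, not_lt] at hx
    rcases hx with h | h
    · exact mul_nonpos_of_nonpos_of_nonneg (by linarith) (by linarith)
    · exact mul_nonpos_of_nonneg_of_nonpos (by linarith) (by linarith)
  simp [unitBump, max_eq_left this]

lemma integral_sub_mul_sub (u v : ℝ) : ∫ x in u..v, (x - u) * (v - x) = (v - u) ^ 3 / 6 := by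
  have : ∀ x : ℝ, (x - u) * (v - x) = -x ^ 2 + (u + v) * x - u * v := fun x => by ring
  simp only [this]
  rw [intervalIntegral.integral_sub, intervalIntegral.integral_add, intervalIntegral.integral_neg,
    intervalIntegral.integral_const_mul, integral_pow, integral_id, intervalIntegral.integral_const]
  · simp only [Nat.reduceAdd, Nat.cast_ofNat, smul_eq_mul]
    ring
  all_goals apply Continuous.intervalIntegrable; fun_prop

lemma integral_unitBump_self (huv : u < v) : ∫ x in u..v, unitBump u v x = 1 := by
  have hpos : 0 < v - u := sub_pos.2 huv
  calc ∫ x in u..v, unitBump u v x = ∫ x in u..v, 6 / (v - u) ^ 3 * ((x - u) * (v - x)) := by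
        refine intervalIntegral.integral_congr fun x hx => ?_
        rw [uIcc_of_le huv.le] at hx
        rw [unitBump, max_eq_right (mul_nonneg (by linarith [hx.1]) (by linarith [hx.2]))]
    _ = 1 := by
        rw [intervalIntegral.integral_const_mul, integral_sub_mul_sub]; field_simp

lemma integral_unitBump (huv : u < v) : ∫ x, unitBump u v x = 1 := by
  rw [← intervalIntegral.integral_eq_integral_of_support_subset, integral_unitBump_self huv]
  exact fun x hx => Ioo_subset_Ioc_self (by_contra fun h => hx (unitBump_eq_zero huv.le h))

lemma integral_unitBump_of_le (hau : a ≤ u) (huv : u < v) (hvb : v ≤ b) :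
    ∫ x in a..b, unitBump u v x = 1 := by
  rw [intervalIntegral.integral_eq_integral_of_support_subset, integral_unitBump huv]
  exact fun x hx => Ioo_subset_Ioc_self (Ioo_subset_Ioo hau hvb
    (by_contra fun h => hx (unitBump_eq_zero huv.le h)))

lemma integrable_unitBump (huv : u ≤ v) : Integrable (unitBump u v) :=
  (continuous_unitBump u v).integrable_of_hasCompactSupport
    (HasCompactSupport.intro isCompact_Icc fun _ hx =>
      unitBump_eq_zero huv fun h => hx (Ioo_subset_Icc_self h))

lemma integral_unitBump_le_one (huv : u < v) (hab : a ≤ b) :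
    ∫ x in a..b, unitBump u v x ≤ 1 := by
  rw [intervalIntegral.integral_of_le hab, ← integral_unitBump huv]
  exact setIntegral_le_integral (integrable_unitBump huv.le)
    (Filter.Eventually.of_forall (unitBump_nonneg huv.le))

lemma integral_unitBump_eq_zero (huv : u ≤ v) (hab : a ≤ b) (h : b ≤ u ∨ v ≤ a) :
    ∫ x in a..b, unitBump u v x = 0 := by
  rw [← intervalIntegral.integral_zero (a := a) (b := b) (μ := volume)]
  refine intervalIntegral.integral_congr fun x hx => unitBump_eq_zero huv fun hx' => ?_
  rw [uIcc_of_le hab] at hx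
  rcases h with h | h
  · linarith [hx.2, hx'.1]
  · linarith [hx.1, hx'.2]

lemma lt_of_integral_unitBump_pos (huv : u ≤ v) (hab : a ≤ b)
    (h : 0 < ∫ x in a..b, unitBump u v x) : a < v ∧ u < b := by
  by_contra hc
  rw [not_and_or, not_lt, not_lt] at hc
  exact h.ne' (integral_unitBump_eq_zero huv hab hc.symm)

end UnitBump

lemma Monotone.exists_mem_Icc_succ {c : ℕ → ℝ} (hc : Monotone c) {N : ℕ} (hN : 0 < N)
    {x : ℝ} (hx : x ∈ Icc (c 0) (c N)) : ∃ j < N, x ∈ Icc (c j) (c (j + 1)) := by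
  rcases hx.1.eq_or_lt with rfl | hx₀
  · exact ⟨0, hN, le_rfl, hc (Nat.zero_le 1)⟩
  · have : x ∈ ⋃ j ∈ Ico 0 N, Ioc (c j) (c (Order.succ j)) := by
      rw [hc.biUnion_Ico_Ioc_map_succ]; exact ⟨hx₀, hx.2⟩
    simp only [mem_iUnion, mem_Ico] at this
    obtain ⟨j, ⟨-, hj⟩, hxj⟩ := this
    exact ⟨j, hj, Ioc_subset_Icc_self hxj⟩

lemma Finset.exists_lt_pos_pos_of_one_lt_sum {ι : Type*} [LinearOrder ι] {s : Finset ι}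
    {f : ι → ℝ} (hf : ∀ i ∈ s, f i ≤ 1) (h : 1 < ∑ i ∈ s, f i) :
    ∃ i ∈ s, ∃ j ∈ s, i < j ∧ 0 < f i ∧ 0 < f j := by
  obtain ⟨i, hi, hfi⟩ : ∃ i ∈ s, (0 : ℝ) < f i :=
    Finset.exists_lt_of_sum_lt (by rw [Finset.sum_const_zero]; linarith)
  obtain ⟨j, hj, hfj⟩ : ∃ j ∈ s.erase i, (0 : ℝ) < f j :=
    Finset.exists_lt_of_sum_lt
      (by rw [Finset.sum_const_zero]; linarith [Finset.add_sum_erase s f hi, hf i hi])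
  obtain ⟨hji, hj⟩ := Finset.mem_erase.1 hj
  rcases hji.lt_or_gt with hlt | hlt
  · exact ⟨j, hj, i, hi, hlt, hfj, hfi⟩
  · exact ⟨i, hi, j, hj, hlt, hfi, hfj⟩

lemma ne_zero_of_cut_ends {N : ℕ} {c : ℕ → ℝ} (h0 : c 0 = 0) (hN : c N = 1) : N ≠ 0 := by
  rintro rfl
  exact zero_ne_one (h0.symm.trans hN)

section Layout

-- Piece `j` is `[c j, c (j + 1)]`, and `e (i, m)` is the `m`-th of the `k` pieces of player `i`.
variable {n k : ℕ} (c : ℕ → ℝ) (e : Fin n × Fin k ≃ Fin (n * k))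

noncomputable def pieceBump (j : ℕ) : ℝ → ℝ := unitBump (c j) (c (j + 1))

lemma integral_pieceBump_piece (hc : StrictMono c) (j j' : ℕ) :
    ∫ x in c j'..c (j' + 1), pieceBump c j x = if j = j' then 1 else 0 := by
  split_ifs with h
  · subst h; exact integral_unitBump_self (hc j.lt_succ_self)
  · refine integral_unitBump_eq_zero (hc.monotone j.le_succ) (hc.monotone j'.le_succ) ?_
    rcases Nat.lt_or_gt_of_ne h with h | h
    · exact Or.inr (hc.monotone h)
    · exact Or.inl (hc.monotone h)

lemma continuous_pieceBump (j : ℕ) : Continuous (pieceBump c j) :=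
  continuous_unitBump _ _

noncomputable def layoutDensity (i : Fin n) (x : ℝ) : ℝ :=
  (k : ℝ)⁻¹ * ∑ m, pieceBump c (e (i, m)) x

lemma continuous_layoutDensity (i : Fin n) : Continuous (layoutDensity c e i) :=
  continuous_const.mul (continuous_finsetSum _ fun _ _ => continuous_pieceBump c _)

lemma layoutDensity_nonneg (hc : Monotone c) (i : Fin n) (x : ℝ) : 0 ≤ layoutDensity c e i x :=
  mul_nonneg (by positivity)
    (Finset.sum_nonneg fun _ _ => unitBump_nonneg (hc (Nat.le_succ _)) x)

lemma layoutDensity_eq_zero (hc : Monotone c) {i : Fin n} {u v : ℝ}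
    (hpieces : ∀ m, u ≤ c (e (i, m)) ∧ c (e (i, m) + 1) ≤ v) {x : ℝ}
    (hx : x ∉ Ioo u v) :
    layoutDensity c e i x = 0 :=
  mul_eq_zero_of_right _ <| Finset.sum_eq_zero fun m _ =>
    unitBump_eq_zero (hc (Nat.le_succ _)) fun h =>
      hx ⟨(hpieces m).1.trans_lt h.1, h.2.trans_le (hpieces m).2⟩

lemma integral_layoutDensity (i : Fin n) (a b : ℝ) :
    ∫ x in a..b, layoutDensity c e i x =
      (k : ℝ)⁻¹ * ∑ m, ∫ x in a..b, pieceBump c (e (i, m)) x := by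
  simp only [layoutDensity]
  rw [intervalIntegral.integral_const_mul,
    intervalIntegral.integral_finsetSum fun _ _ =>
      (continuous_pieceBump c _).intervalIntegrable a b]

lemma integral_layoutDensity_piece (hc : StrictMono c) (i j : Fin n) (m : Fin k) :
    ∫ x in c (e (j, m))..c (e (j, m) + 1), layoutDensity c e i x =
      if i = j then (k : ℝ)⁻¹ else 0 := by
  simp only [integral_layoutDensity, integral_pieceBump_piece c hc, Fin.val_inj,
    e.apply_eq_iff_eq, Prod.mk.injEq]
  by_cases h : i = j <;> simp [h]

lemma integral_layoutDensity_total (hc : StrictMono c) (hk : k ≠ 0) (i : Fin n) :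
    ∫ x in c 0..c (n * k), layoutDensity c e i x = 1 := by
  have hpiece (m : Fin k) : ∫ x in c 0..c (n * k), pieceBump c (e (i, m)) x = 1 :=
    integral_unitBump_of_le (hc.monotone (Nat.zero_le _)) (hc (Nat.lt_succ_self _))
      (hc.monotone (e (i, m)).isLt)
  simp [integral_layoutDensity, hpiece, hk]

lemma card_filter_layout_fst (i : Fin n) :
    (Finset.univ.filter fun j => (e.symm j).1 = i).card = k := by
  calc _ = (Finset.univ : Finset (Fin k)).card := by
        refine Finset.card_nbij' (fun j => (e.symm j).2) (fun m => e (i, m)) (by simp) (by simp)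
          (fun j hj => ?_) (fun m _ => by simp)
        simp only [Finset.coe_filter, Finset.mem_univ, true_and, Set.mem_ofPred_eq] at hj
        simp [← hj]
    _ = k := by simp

def layoutAlloc (hc : Monotone c) (h0 : c 0 = 0) (h1 : c (n * k) = 1) : KPieceAlloc n k where
  lo i m := c (e (i, m))
  hi i m := c (e (i, m) + 1)
  le _ _ := hc (Nat.le_succ _)
  sub i m := Icc_subset_Icc (h0 ▸ hc (Nat.zero_le _)) (h1 ▸ hc (e (i, m)).isLt)
  nonoverlap i m i' m' h := by
    have hne : (e (i, m) : ℕ) ≠ e (i', m') := by simpa [Fin.val_inj] using h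
    exact Set.disjoint_iff_inter_eq_empty.1 (hc.pairwise_disjoint_on_Ioo_succ hne)
  cover := by
    refine Subset.antisymm (iUnion₂_subset fun i m =>
      Icc_subset_Icc (h0 ▸ hc (Nat.zero_le _)) (h1 ▸ hc (e (i, m)).isLt)) fun x hx => ?_
    rw [← h0, ← h1] at hx
    obtain ⟨j, hj, hxj⟩ := hc.exists_mem_Icc_succ
      (Nat.pos_of_ne_zero (ne_zero_of_cut_ends h0 h1)) hx
    obtain ⟨⟨i, m⟩, hij⟩ := e.surjective ⟨j, hj⟩
    exact mem_iUnion₂.2 ⟨i, m, by rwa [hij]⟩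

variable (hc : StrictMono c) (h0 : c 0 = 0) (h1 : c (n * k) = 1)
include hc h0 h1

noncomputable def layoutCake : CakeInstance n where
  d := layoutDensity c e
  cont i := (continuous_layoutDensity c e i).continuousOn
  nonneg i x _ := layoutDensity_nonneg c e hc.monotone i x
  total i := by
    have := integral_layoutDensity_total c e hc (right_ne_zero_of_mul (ne_zero_of_cut_ends h0 h1)) i
    rwa [h0, h1] at this

lemma ival_layoutCake_piece (i j : Fin n) (m : Fin k) :
    (layoutCake c e hc h0 h1).ival i (c (e (j, m))) (c (e (j, m) + 1)) =
      if i = j then (k : ℝ)⁻¹ else 0 :=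
  integral_layoutDensity_piece c e hc i j m

def layoutWitness : XkWitness (layoutCake c e hc h0 h1) k where
  c j := c j
  mono := hc.comp Fin.val_strictMono
  first := h0
  last := h1
  owner j := (e.symm j).1
  ownCount := card_filter_layout_fst e
  zeroVal i j hij := by
    obtain ⟨⟨j', m⟩, rfl⟩ := e.surjective j
    rw [e.symm_apply_apply] at hij
    simpa [Ne.symm hij] using ival_layoutCake_piece c e hc h0 h1 i j' m

lemma layoutWitness_givesOwnedPieces :
    (layoutWitness c e hc h0 h1).givesOwnedPieces (layoutAlloc c e hc.monotone h0 h1) := by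
  intro j
  exact ⟨(e.symm j).2, by simp [layoutWitness, layoutAlloc]⟩

lemma kval_layoutAlloc (i j : Fin n) :
    kval (layoutCake c e hc h0 h1) (layoutAlloc c e hc.monotone h0 h1) i j =
      if i = j then 1 else 0 := by
  have hk : (k : ℝ) ≠ 0 := Nat.cast_ne_zero.2 (right_ne_zero_of_mul (ne_zero_of_cut_ends h0 h1))
  simp only [kval, layoutAlloc, ival_layoutCake_piece]
  split_ifs <;> simp [hk]

lemma kEnvyFree_layoutAlloc :
    kEnvyFree (layoutCake c e hc h0 h1) (layoutAlloc c e hc.monotone h0 h1) := by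
  intro i j
  rw [kval_layoutAlloc, kval_layoutAlloc, if_pos rfl]
  split_ifs <;> norm_num

lemma kEgal_layoutAlloc :
    kEgal (layoutCake c e hc h0 h1) (layoutAlloc c e hc.monotone h0 h1) = 1 := by
  have : Nonempty (Fin n) :=
    ⟨⟨0, Nat.pos_of_ne_zero (left_ne_zero_of_mul (ne_zero_of_cut_ends h0 h1))⟩⟩
  simp [kEgal, kval_layoutAlloc]

end Layout

section Contiguous

variable {n : ℕ} (C : CakeInstance n) (B : ContigAlloc n)

lemma ContigAlloc.le_or_le_of_ne {s t : Fin n} (h : s ≠ t) :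
    B.x s.succ ≤ B.x t.castSucc ∨ B.x t.succ ≤ B.x s.castSucc := by
  rcases h.lt_or_gt with h | h
  · exact Or.inl (B.mono (Fin.succ_le_castSucc_iff.2 h))
  · exact Or.inr (B.mono (Fin.succ_le_castSucc_iff.2 h))

lemma cEgal_le_cval (i : Fin n) : cEgal C B ≤ cval C B i i :=
  ciInf_le (Set.finite_range _).bddBelow i

lemma cval_self_eq_zero_of_density_eq_zero {i p : Fin n} (hip : i ≠ p) {u v : ℝ}
    (hu : B.x (B.σ.symm i).castSucc ≤ u) (hv : v ≤ B.x (B.σ.symm i).succ)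
    (hd : ∀ x ∉ Ioo u v, C.d p x = 0) : cval C B p p = 0 := by
  have hst : B.σ.symm p ≠ B.σ.symm i := fun h => hip (B.σ.symm.injective h).symm
  rw [cval, CakeInstance.ival, ← intervalIntegral.integral_zero (a := B.x (B.σ.symm p).castSucc)]
  refine intervalIntegral.integral_congr fun x hx => hd x fun hx' => ?_
  rw [uIcc_of_le (B.mono (Fin.castSucc_le_succ _))] at hx
  rcases B.le_or_le_of_ne hst with h | h
  · linarith [hx.2, hx'.1]
  · linarith [hx.1, hx'.2]

end Contiguous

lemma Nat.eq_and_eq_of_mul_add_eq {d q q' r r' : ℕ} (hr : r < d) (hr' : r' < d)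
    (h : d * q + r = d * q' + r') : q = q' ∧ r = r' := by
  have hd : 0 < d := (Nat.zero_le r).trans_lt hr
  obtain ⟨hq, hr⟩ := (Nat.div_mod_unique hd).2 ⟨add_comm _ _, hr⟩
  obtain ⟨hq', hr'⟩ := (Nat.div_mod_unique hd).2 ⟨add_comm _ _, hr'⟩
  rw [h] at hq hr
  exact ⟨hq.symm.trans hq', hr.symm.trans hr'⟩

-- Player `0` owns pieces `0, n + 1, 2 (n + 1), …`; player `q + 1` owns the `n` pieces strictly
-- between the `q`-th and `(q + 1)`-th pieces of player `0`.
def separatedPos (n : ℕ) : ℕ → ℕ → ℕ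
  | 0, m => (n + 1) * m
  | q + 1, m => (n + 1) * q + (m + 1)

section Separated

variable {n : ℕ}

lemma separatedPos_lt {i m : ℕ} (hi : i < n) (hm : m < n) : separatedPos n i m < n * n := by
  cases i with
  | zero => simp only [separatedPos]; nlinarith
  | succ q => simp only [separatedPos]; nlinarith

lemma separatedPos_injective {i i' m m' : ℕ} (hm : m < n) (hm' : m' < n)
    (h : separatedPos n i m = separatedPos n i' m') : i = i' ∧ m = m' := by
  cases i <;> cases i' <;> simp only [separatedPos] at h
  · exact ⟨rfl, Nat.eq_of_mul_eq_mul_left n.succ_pos h⟩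
  · rw [← add_zero ((n + 1) * m)] at h
    have := Nat.eq_and_eq_of_mul_add_eq n.succ_pos (by omega) h
    omega
  · rw [← add_zero ((n + 1) * m')] at h
    have := Nat.eq_and_eq_of_mul_add_eq (by omega) n.succ_pos h
    omega
  · have := Nat.eq_and_eq_of_mul_add_eq (by omega) (by omega) h
    omega

noncomputable def separatedLayout (n : ℕ) : Fin n × Fin n ≃ Fin (n * n) :=
  Equiv.ofBijective (fun p => ⟨separatedPos n p.1 p.2, separatedPos_lt p.1.2 p.2.2⟩) <|
    (Fintype.bijective_iff_injective_and_card _).2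
      ⟨fun p p' h => by
        obtain ⟨hi, hm⟩ := separatedPos_injective p.2.2 p'.2.2 (Fin.val_eq_of_eq h)
        exact Prod.ext (Fin.ext hi) (Fin.ext hm), by simp⟩

lemma separatedLayout_mem_block {q : ℕ} (hq : q + 1 < n) (m : Fin n) :
    (n + 1) * q + 1 ≤ separatedLayout n (⟨q + 1, hq⟩, m) ∧
      (separatedLayout n (⟨q + 1, hq⟩, m) : ℕ) + 1 ≤ (n + 1) * (q + 1) := by
  change (n + 1) * q + 1 ≤ (n + 1) * q + (m + 1) ∧
    (n + 1) * q + (m + 1) + 1 ≤ (n + 1) * (q + 1)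
  have := m.isLt
  constructor <;> [omega; (rw [mul_add_one]; omega)]

end Separated

theorem cEgal_layoutCake_separatedLayout_le {n : ℕ} (c : ℕ → ℝ) (hc : StrictMono c)
    (h0 : c 0 = 0) (h1 : c (n * n) = 1) (B : ContigAlloc n) :
    cEgal (layoutCake c (separatedLayout n) hc h0 h1) B ≤ 1 / n := by
  set C := layoutCake c (separatedLayout n) hc h0 h1
  have hn : 0 < n := Nat.pos_of_ne_zero (left_ne_zero_of_mul (ne_zero_of_cut_ends h0 h1))
  set i₀ : Fin n := ⟨0, hn⟩
  set a := B.x (B.σ.symm i₀).castSucc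
  set b := B.x (B.σ.symm i₀).succ
  have hab : a ≤ b := B.mono (Fin.castSucc_le_succ _)
  by_cases hle : cval C B i₀ i₀ ≤ 1 / n
  · exact (cEgal_le_cval C B i₀).trans hle
  have hsum : 1 < ∑ m, ∫ x in a..b, pieceBump c (separatedLayout n (i₀, m)) x := by
    have hval : cval C B i₀ i₀ = (n : ℝ)⁻¹ * _ := integral_layoutDensity c _ i₀ a b
    refine lt_of_not_ge fun hsum => hle ?_
    rw [hval, one_div]
    exact mul_le_of_le_one_right (by positivity) hsum
  obtain ⟨m₁, -, m₂, -, hm, hpos₁, hpos₂⟩ := Finset.exists_lt_pos_pos_of_one_lt_sum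
    (fun m _ => integral_unitBump_le_one (hc (Nat.lt_succ_self _)) hab) hsum
  have ha : a < c ((n + 1) * m₁ + 1) :=
    (lt_of_integral_unitBump_pos (hc.monotone (Nat.le_succ _)) hab hpos₁).1
  have hb : c ((n + 1) * m₂) < b :=
    (lt_of_integral_unitBump_pos (hc.monotone (Nat.le_succ _)) hab hpos₂).2
  have hp : (m₁ : ℕ) + 1 < n := by
    have : (m₁ : ℕ) < m₂ := hm
    omega
  set p : Fin n := ⟨m₁ + 1, hp⟩
  -- player `0`'s interval swallows all the pieces of player `p`
  have hstarved : cval C B p p = 0 := by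
    refine cval_self_eq_zero_of_density_eq_zero C B (i := i₀)
      (Fin.ne_of_val_ne (by simp [i₀, p])) ha.le
      ((hc.monotone (Nat.mul_le_mul_left _ hm)).trans hb.le)
      fun x hx => layoutDensity_eq_zero c _ hc.monotone (fun m => ?_) hx
    obtain ⟨hlo, hhi⟩ := separatedLayout_mem_block hp m
    exact ⟨hc.monotone hlo, hc.monotone hhi⟩
  calc cEgal C B ≤ cval C B p p := cEgal_le_cval C B p
    _ = 0 := hstarved
    _ ≤ 1 / n := by positivity

/-- For every `n ≥ 2` and `δ > 0` there is an `n`-player instance in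
`X(n)` in which the `n`-piece allocation giving each player his own pieces is envy-free
with egalitarian welfare `1`, while every envy-free contiguous allocation has
egalitarian welfare at most `1/n + δ`; consequently `POIE_f(n,k) = n` for `k ≥ n`. -/
theorem poief_large_k (n : ℕ) (hn : 2 ≤ n) (δ : ℝ) (hδ : 0 < δ) :
    ∃ (C : CakeInstance n) (W : XkWitness C n),
      (∃ A : KPieceAlloc n n, W.givesOwnedPieces A ∧ kEnvyFree C A ∧
        kEgal C A = 1) ∧
      (∀ B : ContigAlloc n, cEnvyFree C B → cEgal C B ≤ 1/(n:ℝ) + δ) := by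
  have hN : (0 : ℝ) < (n * n : ℕ) := by positivity
  set c : ℕ → ℝ := fun j => j / (n * n : ℕ)
  have hc : StrictMono c := fun i j hij => div_lt_div_of_pos_right (Nat.cast_lt.2 hij) hN
  have h0 : c 0 = 0 := by simp [c]
  have h1 : c (n * n) = 1 := div_self hN.ne'
  refine ⟨layoutCake c _ hc h0 h1, layoutWitness c (separatedLayout n) hc h0 h1,
    ⟨layoutAlloc c _ hc.monotone h0 h1, layoutWitness_givesOwnedPieces c _ hc h0 h1,
      kEnvyFree_layoutAlloc c _ hc h0 h1, kEgal_layoutAlloc c _ hc h0 h1⟩,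
    fun B _ => (cEgal_layoutCake_separatedLayout_le c hc h0 h1 B).trans
      (le_add_of_nonneg_right hδ.le)⟩
end
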